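/- arXiv:2605.13025 — 11 statements merged into one kernel-verified Lean document; each statement's English description precedes it below -/
import Mathlib

section
/- Let A be a finite nonempty set and let z, z' : A → ℝ. Then ‖Softmax(z) − Softmax(z')‖₁ ≤ ‖z − z'‖∞, i.e., Σ_a |Softmax(z)(a) − Softmax(z')(a)| ≤ max_a |z(a) − z'(a)|. -/
open Finset

/-- The softmax distribution associated with a score vector on a finite type. -/
noncomputable def softmax {A : Type*} [Fintype A] (z : A → ℝ) : A → ℝ :=
  fun a => Real.exp (z a) / ∑ b, Real.exp (z b)


lemma exp_key {t : ℝ} (ht : 0 ≤ t) : Real.exp t * (2 - t) ≤ 2 + t := by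
  rcases le_or_gt t 1 with h1 | h1
  · have hb := Real.exp_bound (x := -t) (by rwa [abs_neg, abs_of_nonneg ht]) (n := 5) (by norm_num)
    rw [abs_sub_le_iff] at hb
    have hlow : 1 - t + t^2/2 - t^3/6 + t^4/24 - t^5/100 ≤ Real.exp (-t) := by
      have h2 := hb.2
      rw [Finset.sum_range_succ, Finset.sum_range_succ, Finset.sum_range_succ,
        Finset.sum_range_succ, Finset.sum_range_succ, Finset.sum_range_zero] at h2
      have habs : |(-t)| = t := by rw [abs_neg, abs_of_nonneg ht]
      rw [habs] at h2
      norm_num [Nat.factorial] at h2 ⊢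
      nlinarith [h2]
    have h2 : 2 - t ≤ (2 + t) * Real.exp (-t) := by
      nlinarith [hlow, pow_nonneg ht 3, pow_nonneg ht 4, pow_nonneg ht 5,
        mul_nonneg (pow_nonneg ht 3) (sub_nonneg.2 h1), mul_nonneg (pow_nonneg ht 4) (sub_nonneg.2 h1)]
    have hee : Real.exp t * Real.exp (-t) = 1 := by rw [← Real.exp_add]; simp
    nlinarith [mul_le_mul_of_nonneg_left h2 (Real.exp_pos t).le, hee]
  · rcases le_or_gt 2 t with h2 | h2
    · nlinarith [Real.exp_pos t]
    · have h3 : 2 - t ≤ Real.exp (1 - t) := by nlinarith [Real.add_one_le_exp (1 - t)]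
      have h4 : Real.exp t * Real.exp (1 - t) = Real.exp 1 := by
        rw [← Real.exp_add]; ring_nf
      have h5 : Real.exp 1 < 2.7182818286 := Real.exp_one_lt_d9
      nlinarith [mul_le_mul_of_nonneg_left h3 (Real.exp_pos t).le]

lemma inv_key {t : ℝ} (ht : 0 < t) : 1/t - 1/2 ≤ 1/(Real.exp t - 1) := by
  have hu : 0 < Real.exp t - 1 := by nlinarith [Real.add_one_le_exp t]
  rw [div_sub_div _ _ ht.ne' two_ne_zero, div_le_div_iff₀ (by positivity) hu]
  nlinarith [exp_key ht.le]

lemma inv_key' {t : ℝ} (ht : 0 < t) : 1/t + 1/2 ≤ 1/(1 - Real.exp (-t)) := by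
  have hv : 0 < 1 - Real.exp (-t) := by
    have : Real.exp (-t) < 1 := Real.exp_lt_one_iff.2 (by linarith)
    linarith
  rw [div_add_div _ _ ht.ne' two_ne_zero, div_le_div_iff₀ (by positivity) hv]
  have hee : Real.exp t * Real.exp (-t) = 1 := by rw [← Real.exp_add]; simp
  nlinarith [mul_le_mul_of_nonneg_right (exp_key ht.le) (Real.exp_pos (-t)).le, hee]


lemma final_arith {s u v Qp Qn B C : ℝ} (hs : 0 < s) (hu : 0 < u) (hv : 0 < v)
    (hQp : 0 ≤ Qp) (hQn : 0 ≤ Qn) (hQ : Qp + Qn = 1)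
    (hb1 : s ≤ Qp * u) (hb2 : s ≤ Qn * v)
    (h1 : 1/B - 1/2 ≤ 1/u) (h2 : 1/C + 1/2 ≤ 1/v) (hB : 0 < B) (hC : 0 < C) :
    4 * s ≤ B + C := by
  have hQp' : s / u ≤ Qp := by rw [div_le_iff₀ hu]; linarith
  have hQn' : s / v ≤ Qn := by rw [div_le_iff₀ hv]; linarith
  have hsum : s * (1/u) + s * (1/v) ≤ 1 := by
    have e1 : s * (1/u) = s / u := by ring
    have e2 : s * (1/v) = s / v := by ring
    rw [e1, e2]; linarith
  have hmid : s * (1/B + 1/C) ≤ 1 := by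
    nlinarith [mul_le_mul_of_nonneg_left h1 hs.le, mul_le_mul_of_nonneg_left h2 hs.le]
  have hAMHM : 4 / (B + C) ≤ 1/B + 1/C := by
    rw [div_add_div _ _ hB.ne' hC.ne', div_le_div_iff₀ (by linarith) (by positivity)]
    nlinarith [sq_nonneg (B - C)]
  have hfin : s * (4 / (B + C)) ≤ 1 :=
    le_trans (mul_le_mul_of_nonneg_left hAMHM hs.le) hmid
  rw [mul_div_assoc', div_le_one (by linarith)] at hfin
  linarith

/-- the softmax map is 1-Lipschitz from `ℓ∞` to `ℓ1`:
`Σ_a |Softmax(z)(a) − Softmax(z')(a)| ≤ max_a |z(a) − z'(a)|`. -/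
theorem stmt2 {A : Type*} [Fintype A] [Nonempty A] (z z' : A → ℝ) :
    ∑ a, |softmax z a - softmax z' a|
      ≤ Finset.univ.sup' Finset.univ_nonempty (fun a => |z a - z' a|) := by
  classical
  set δ := Finset.univ.sup' Finset.univ_nonempty (fun a => |z a - z' a|) with hδ_def
  set S : ℝ := ∑ b, Real.exp (z b) with hS_def
  set S' : ℝ := ∑ b, Real.exp (z' b) with hS'_def
  have hS : 0 < S := Finset.sum_pos (fun b _ => Real.exp_pos _) univ_nonempty
  have hS' : 0 < S' := Finset.sum_pos (fun b _ => Real.exp_pos _) univ_nonempty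
  set d : A → ℝ := fun a => z a - z' a with hd_def
  set r : ℝ := Real.log S - Real.log S' with hr_def
  have hexp_r : Real.exp r = S / S' := by
    rw [hr_def, Real.exp_sub, Real.exp_log hS, Real.exp_log hS']
  set q : A → ℝ := fun a => Real.exp (z' a) / S' with hq_def
  have hq_pos : ∀ a, 0 < q a := fun a => div_pos (Real.exp_pos _) hS'
  have hq_sum : ∑ a, q a = 1 := by
    rw [hq_def, ← Finset.sum_div, ← hS'_def, div_self hS'.ne']
  have hp : ∀ a, softmax z a = q a * Real.exp (d a - r) := by
    intro a
    simp only [softmax, hq_def, hd_def, ← hS_def]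
    rw [show z a - z' a - r = z a - (z' a + r) by ring, Real.exp_sub, Real.exp_add, hexp_r]
    field_simp
  have hq' : ∀ a, softmax z' a = q a := by
    intro a; simp only [softmax, hq_def, ← hS'_def]
  -- M, m bounds
  set M := Finset.univ.sup' Finset.univ_nonempty d with hM_def
  set m := Finset.univ.inf' Finset.univ_nonempty d with hm_def
  have hd_le_M : ∀ a, d a ≤ M := fun a => Finset.le_sup' d (mem_univ a)
  have hm_le_d : ∀ a, m ≤ d a := fun a => Finset.inf'_le d (mem_univ a)
  have habs : ∀ a, |d a| ≤ δ := fun a => Finset.le_sup' (fun a => |z a - z' a|) (mem_univ a)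
  have hM_le_δ : M ≤ δ := Finset.sup'_le _ _ fun a _ => (le_abs_self _).trans (habs a)
  have hm_ge : -δ ≤ m := Finset.le_inf' _ _ fun a _ => le_trans (neg_le_neg (habs a)) (neg_abs_le _)
  have hδ_nonneg : 0 ≤ δ := le_trans (abs_nonneg _) (habs (Classical.arbitrary A))
  have hS_le : S ≤ S' * Real.exp M := by
    calc S = ∑ b, Real.exp (z' b) * Real.exp (d b) := by
          refine Finset.sum_congr rfl fun b _ => ?_
          rw [← Real.exp_add]; congr 1; simp [hd_def]
      _ ≤ ∑ b, Real.exp (z' b) * Real.exp M :=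
          Finset.sum_le_sum fun b _ =>
            mul_le_mul_of_nonneg_left (Real.exp_le_exp.2 (hd_le_M b)) (Real.exp_pos _).le
      _ = S' * Real.exp M := by rw [← Finset.sum_mul]
  have hS_ge : S' * Real.exp m ≤ S := by
    calc S' * Real.exp m = ∑ b, Real.exp (z' b) * Real.exp m := by rw [← Finset.sum_mul]
      _ ≤ ∑ b, Real.exp (z' b) * Real.exp (d b) :=
          Finset.sum_le_sum fun b _ =>
            mul_le_mul_of_nonneg_left (Real.exp_le_exp.2 (hm_le_d b)) (Real.exp_pos _).le
      _ = S := by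
          refine (Finset.sum_congr rfl fun b _ => ?_).symm
          rw [← Real.exp_add]; congr 1; simp [hd_def]
  have hr_le_M : r ≤ M := by
    have : Real.exp r ≤ Real.exp M := by
      rw [hexp_r, div_le_iff₀ hS']; linarith
    exact Real.exp_le_exp.1 this
  have hm_le_r : m ≤ r := by
    have : Real.exp m ≤ Real.exp r := by
      rw [hexp_r, le_div_iff₀ hS']; linarith
    exact Real.exp_le_exp.1 this
  -- the difference function
  set x : A → ℝ := fun a => softmax z a - softmax z' a with hx_def
  have hx_sum : ∑ a, x a = 0 := by
    have hs1 : ∑ a, softmax z a = 1 := by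
      simp only [softmax, ← hS_def]
      rw [← Finset.sum_div, ← hS_def, div_self hS.ne']
    have hs2 : ∑ a, softmax z' a = 1 := by
      simp only [softmax, ← hS'_def]
      rw [← Finset.sum_div, ← hS'_def, div_self hS'.ne']
    simp only [hx_def, Finset.sum_sub_distrib, hs1, hs2, sub_self]
  have hxa : ∀ a, x a = q a * (Real.exp (d a - r) - 1) := by
    intro a; rw [hx_def]; simp only []; rw [hp a, hq' a]; ring
  set P := Finset.univ.filter (fun a => 0 < x a) with hP_def
  set N := Finset.univ.filter (fun a => ¬ 0 < x a) with hN_def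
  set σ := ∑ a ∈ P, x a with hσ_def
  have hsplit : ∑ a, |x a| = σ + ∑ a ∈ N, -(x a) := by
    rw [hσ_def, ← Finset.sum_filter_add_sum_filter_not univ (fun a => 0 < x a) (fun a => |x a|)]
    congr 1
    · exact Finset.sum_congr rfl fun a ha => abs_of_pos (Finset.mem_filter.1 ha).2
    · exact Finset.sum_congr rfl fun a ha => abs_of_nonpos (not_lt.1 (Finset.mem_filter.1 ha).2)
  have hzero : σ + ∑ a ∈ N, x a = 0 := by
    rw [hσ_def, Finset.sum_filter_add_sum_filter_not]; exact hx_sum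
  have hPN : ∑ a ∈ N, -(x a) = σ := by
    rw [Finset.sum_neg_distrib]; linarith
  rw [hsplit, hPN]
  -- bounds
  set Qp := ∑ a ∈ P, q a with hQp_def
  set Qn := ∑ a ∈ N, q a with hQn_def
  have hQp_nonneg : 0 ≤ Qp := Finset.sum_nonneg fun a _ => (hq_pos a).le
  have hQn_nonneg : 0 ≤ Qn := Finset.sum_nonneg fun a _ => (hq_pos a).le
  have hQ_sum : Qp + Qn = 1 := by
    rw [hQp_def, hQn_def, Finset.sum_filter_add_sum_filter_not]; exact hq_sum
  have hbound1 : σ ≤ Qp * (Real.exp (M - r) - 1) := by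
    rw [hσ_def, hQp_def, Finset.sum_mul]
    refine Finset.sum_le_sum fun a _ => ?_
    rw [hxa a]
    refine mul_le_mul_of_nonneg_left ?_ (hq_pos a).le
    have : Real.exp (d a - r) ≤ Real.exp (M - r) :=
      Real.exp_le_exp.2 (by linarith [hd_le_M a])
    linarith
  have hbound2 : σ ≤ Qn * (1 - Real.exp (m - r)) := by
    rw [← hPN, hQn_def, Finset.sum_mul]
    refine Finset.sum_le_sum fun a _ => ?_
    rw [hxa a]
    have : Real.exp (m - r) ≤ Real.exp (d a - r) :=
      Real.exp_le_exp.2 (by linarith [hm_le_d a])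
    nlinarith [hq_pos a]
  rcases le_or_gt σ 0 with hσ | hσ
  · linarith
  · -- σ > 0
    set u := Real.exp (M - r) - 1 with hu_def
    set v := 1 - Real.exp (m - r) with hv_def
    have hu_pos : 0 < u := by
      by_contra h
      push_neg at h
      have h2 : Qp * u ≤ 0 := mul_nonpos_of_nonneg_of_nonpos hQp_nonneg h
      linarith [hbound1]
    have hv_pos : 0 < v := by
      by_contra h
      push_neg at h
      have h2 : Qn * v ≤ 0 := mul_nonpos_of_nonneg_of_nonpos hQn_nonneg h
      linarith [hbound2]
    have hB : 0 < M - r := by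
      by_contra h
      push_neg at h
      have : Real.exp (M - r) ≤ 1 := by
        calc Real.exp (M - r) ≤ Real.exp 0 := Real.exp_le_exp.2 h
          _ = 1 := Real.exp_zero
      rw [hu_def] at hu_pos; linarith
    have hC : 0 < r - m := by
      by_contra h
      push_neg at h
      have : 1 ≤ Real.exp (m - r) := by
        calc (1:ℝ) = Real.exp 0 := Real.exp_zero.symm
          _ ≤ Real.exp (m - r) := Real.exp_le_exp.2 (by linarith)
      rw [hv_def] at hv_pos; linarith
    have h1 : 1/(M - r) - 1/2 ≤ 1/u := by
      rw [hu_def]; exact inv_key hB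
    have h2 : 1/(r - m) + 1/2 ≤ 1/v := by
      have := inv_key' hC
      rw [show -(r - m) = m - r by ring] at this
      rw [hv_def]; exact this
    have := final_arith hσ hu_pos hv_pos hQp_nonneg hQn_nonneg hQ_sum hbound1 hbound2 h1 h2 hB hC
    linarith
end

section
/- Let A be a finite nonempty set and let θ, θ' : A → ℝ. Then KL(Softmax(θ) ‖ Softmax(θ')) ≤ (1/2)·‖θ − θ'‖∞². -/
open Finset

/-- KL divergence between two distributions on a finite type
(with the convention `0 * log 0 = 0`, which holds in Lean since `Real.log 0 = 0`). -/
noncomputable def KLdiv {A : Type*} [Fintype A] (p q : A → ℝ) : ℝ :=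
  ∑ a, p a * Real.log (p a / q a)

/-! With `δ = θ' - θ` and `p = softmax θ`, the ratio `p / softmax θ'` is `e^{-δ} · E_p[e^δ]`, so
`KL(p ‖ softmax θ') = log E_p[e^δ] - E_p[δ]`: the cumulant generating function at `1` of the
centred variable `δ - E_p[δ]`. As `δ` takes values in `[-M, M]` with `M = ‖θ - θ'‖∞`, Hoeffding's
lemma bounds it by `(2M)² / 8 = M² / 2`. -/

open Real

section Hoeffding

open MeasureTheory ProbabilityTheory

theorem Real.log_sum_mul_exp_le_of_mem_Icc {ι : Type*} [Fintype ι] {p : ι → ℝ}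
    (hp : ∀ i, 0 ≤ p i) (hp1 : ∑ i, p i = 1) {X : ι → ℝ} {a b : ℝ}
    (hX : ∀ i, X i ∈ Set.Icc a b) :
    log (∑ i, p i * exp (X i)) ≤ ∑ i, p i * X i + (b - a) ^ 2 / 8 := by
  let _ : MeasurableSpace ι := ⊤
  have : MeasurableSingletonClass ι := ⟨fun _ => trivial⟩
  let P := PMF.ofFintype (fun i => ENNReal.ofReal (p i))
    (by rw [← ENNReal.ofReal_sum_of_nonneg fun i _ => hp i, hp1, ENNReal.ofReal_one])
  have hint (f : ι → ℝ) : ∫ i, f i ∂P.toMeasure = ∑ i, p i * f i := by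
    simp [P, PMF.integral_eq_sum, ENNReal.toReal_ofReal (hp _)]
  have hpos : 0 < ∑ i, p i * exp (X i) := by
    obtain ⟨i, -, hi⟩ := exists_lt_of_sum_lt (by simp [hp1] : ∑ _ : ι, (0 : ℝ) < ∑ i, p i)
    exact sum_pos' (fun i _ => mul_nonneg (hp i) (exp_pos _).le)
      ⟨i, mem_univ i, mul_pos hi (exp_pos _)⟩
  have hcgf : cgf (fun i => X i - ∫ j, X j ∂P.toMeasure) P.toMeasure 1
      = log (∑ i, p i * exp (X i)) - ∑ i, p i * X i := by
    simp only [cgf, mgf, hint, one_mul, exp_sub, ← sum_div, mul_div_assoc']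
    rw [log_div hpos.ne' (exp_pos _).ne', log_exp]
  have hoeffding := (hasSubgaussianMGF_of_mem_Icc (μ := P.toMeasure)
    (measurable_of_countable X).aemeasurable (ae_of_all _ hX)).cgf_le 1
  simp only [hcgf, NNReal.coe_pow, NNReal.coe_div, coe_nnnorm, norm_eq_abs, div_pow, sq_abs,
    NNReal.coe_ofNat, one_pow, mul_one] at hoeffding
  linarith

end Hoeffding

section Softmax

variable {A : Type*} [Fintype A]

theorem softmax_nonneg (z : A → ℝ) (a : A) : 0 ≤ softmax z a :=
  div_nonneg (exp_pos _).le (sum_nonneg fun _ _ => (exp_pos _).le)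

variable [Nonempty A]

theorem sum_exp_pos (z : A → ℝ) : 0 < ∑ b, exp (z b) :=
  sum_pos (fun _ _ => exp_pos _) univ_nonempty

theorem sum_softmax (z : A → ℝ) : ∑ a, softmax z a = 1 := by
  simp only [softmax, ← sum_div, div_self (sum_exp_pos z).ne']

theorem sum_softmax_mul_exp_sub (θ θ' : A → ℝ) :
    ∑ a, softmax θ a * exp (θ' a - θ a) = (∑ a, exp (θ' a)) / ∑ a, exp (θ a) := by
  simp only [softmax, exp_sub, sum_div]
  refine sum_congr rfl fun a _ => ?_
  field_simp

theorem log_softmax_div_softmax (θ θ' : A → ℝ) (a : A) :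
    log (softmax θ a / softmax θ' a)
      = θ a - θ' a + log (∑ b, softmax θ b * exp (θ' b - θ b)) := by
  have hZ := sum_exp_pos θ
  have hZ' := sum_exp_pos θ'
  rw [sum_softmax_mul_exp_sub, ← log_exp (θ a - θ' a), ← log_mul (exp_pos _).ne' (by positivity)]
  congr 1
  simp only [softmax, exp_sub]
  field_simp

theorem KLdiv_softmax_softmax (θ θ' : A → ℝ) :
    KLdiv (softmax θ) (softmax θ')
      = log (∑ a, softmax θ a * exp (θ' a - θ a)) - ∑ a, softmax θ a * (θ' a - θ a) := by
  simp only [KLdiv, log_softmax_div_softmax, mul_add, sum_add_distrib, ← sum_mul, sum_softmax,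
    one_mul, mul_sub, sum_sub_distrib]
  ring

end Softmax

/-- quadratic KL bound between softmax distributions:
`KL(Softmax(θ) ‖ Softmax(θ')) ≤ (1/2) ‖θ − θ'‖∞²`. -/
theorem stmt3 {A : Type*} [Fintype A] [Nonempty A] (θ θ' : A → ℝ) :
    KLdiv (softmax θ) (softmax θ')
      ≤ (1/2) * (Finset.univ.sup' Finset.univ_nonempty (fun a => |θ a - θ' a|))^2 := by
  set M := Finset.univ.sup' Finset.univ_nonempty (fun a => |θ a - θ' a|)
  have hbound (a : A) : θ' a - θ a ∈ Set.Icc (-M) M :=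
    abs_le.mp ((abs_sub_comm _ _).trans_le (le_sup' (fun a => |θ a - θ' a|) (mem_univ a)))
  have hoeffding := log_sum_mul_exp_le_of_mem_Icc (softmax_nonneg θ)
    (sum_softmax θ) hbound
  rw [KLdiv_softmax_softmax]
  linarith
end

section
/- Let A be a finite nonempty set and let z, z' : A → ℝ. Then for every a ∈ A, Softmax(z)(a) / Softmax(z')(a) ≤ exp(2·‖z − z'‖∞). -/
open Finset

/-- pointwise softmax density-ratio bound:
`Softmax(z)(a) / Softmax(z')(a) ≤ exp(2 ‖z − z'‖∞)` for every `a`. -/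
theorem stmt4 {A : Type*} [Fintype A] [Nonempty A] (z z' : A → ℝ) (a : A) :
    softmax z a / softmax z' a
      ≤ Real.exp (2 * Finset.univ.sup' Finset.univ_nonempty (fun b => |z b - z' b|)) := by
  set M := Finset.univ.sup' Finset.univ_nonempty (fun b => |z b - z' b|) with hMdef
  have hM : ∀ b, |z b - z' b| ≤ M := fun b => le_sup' (fun c => |z c - z' c|) (mem_univ b)
  have hS : (0:ℝ) < ∑ b, Real.exp (z b) :=
    Finset.sum_pos (fun b _ => Real.exp_pos _) univ_nonempty
  have hS' : (0:ℝ) < ∑ b, Real.exp (z' b) :=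
    Finset.sum_pos (fun b _ => Real.exp_pos _) univ_nonempty
  have h1 : Real.exp (z a) / Real.exp (z' a) ≤ Real.exp M := by
    rw [← Real.exp_sub]
    exact Real.exp_le_exp.2 ((abs_le.1 (hM a)).2.trans (le_refl _) |>.trans (le_refl _))
  have h2 : (∑ b, Real.exp (z' b)) / (∑ b, Real.exp (z b)) ≤ Real.exp M := by
    rw [div_le_iff₀ hS]
    calc (∑ b, Real.exp (z' b)) ≤ ∑ b, Real.exp M * Real.exp (z b) := by
          apply Finset.sum_le_sum
          intro b _
          rw [← Real.exp_add]
          apply Real.exp_le_exp.2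
          have := (abs_le.1 (hM b)).1
          linarith
      _ = Real.exp M * ∑ b, Real.exp (z b) := by rw [Finset.mul_sum]
  unfold softmax
  rw [div_div_div_comm, div_div_eq_mul_div]
  have key : Real.exp (z a) / Real.exp (z' a) *
      ((∑ b, Real.exp (z' b)) / (∑ b, Real.exp (z b))) ≤ Real.exp M * Real.exp M := by
    apply mul_le_mul h1 h2 (by positivity) (le_of_lt (Real.exp_pos _))
  calc Real.exp (z a) / Real.exp (z' a) * (∑ b, Real.exp (z' b)) / (∑ b, Real.exp (z b))
      = Real.exp (z a) / Real.exp (z' a) *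
        ((∑ b, Real.exp (z' b)) / (∑ b, Real.exp (z b))) := by
        rw [mul_div_assoc]
    _ ≤ Real.exp M * Real.exp M := key
    _ = Real.exp (2 * M) := by rw [← Real.exp_add]; ring_nf
end

section
/- Let A₁, A₂ be finite nonempty sets, G : A₁ × A₂ → ℝ, η > 0, and π₁ʳᵉᶠ ∈ Δ(A₁), π₂ʳᵉᶠ ∈ Δ(A₂) strictly positive. Then the KL-regularized zero-sum game objective J_G admits a saddle point (μ*, ν*) ∈ Δ(A₁) × Δ(A₂), this saddle point is unique, and both components μ* and ν* are strictly positive. -/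
open Finset

/-- The probability simplex on a finite type: nonnegative entries summing to one. -/
def IsSimplex {A : Type*} [Fintype A] (p : A → ℝ) : Prop :=
  (∀ a, 0 ≤ p a) ∧ ∑ a, p a = 1

/-- The KL-regularized zero-sum game objective
`J_G(μ, ν) = Σ_{a₁,a₂} μ(a₁) ν(a₂) G(a₁,a₂) − η⁻¹ KL(μ‖π₁ʳᵉᶠ) + η⁻¹ KL(ν‖π₂ʳᵉᶠ)`. -/
noncomputable def J {A₁ A₂ : Type*} [Fintype A₁] [Fintype A₂]
    (G : A₁ × A₂ → ℝ) (η : ℝ) (π₁ref : A₁ → ℝ) (π₂ref : A₂ → ℝ)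
    (μ : A₁ → ℝ) (ν : A₂ → ℝ) : ℝ :=
  (∑ a₁, ∑ a₂, μ a₁ * ν a₂ * G (a₁, a₂))
    - η⁻¹ * KLdiv μ π₁ref + η⁻¹ * KLdiv ν π₂ref

/-- `(μs, νs)` is a saddle point of `J_G` over the product of simplices:
`J_G(μ, νs) ≤ J_G(μs, νs) ≤ J_G(μs, ν)` for all `μ ∈ Δ(A₁)`, `ν ∈ Δ(A₂)`. -/
def IsSaddle {A₁ A₂ : Type*} [Fintype A₁] [Fintype A₂]
    (G : A₁ × A₂ → ℝ) (η : ℝ) (π₁ref : A₁ → ℝ) (π₂ref : A₂ → ℝ)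
    (μs : A₁ → ℝ) (νs : A₂ → ℝ) : Prop :=
  IsSimplex μs ∧ IsSimplex νs ∧
  (∀ μ : A₁ → ℝ, IsSimplex μ → J G η π₁ref π₂ref μ νs ≤ J G η π₁ref π₂ref μs νs) ∧
  (∀ ν : A₂ → ℝ, IsSimplex ν → J G η π₁ref π₂ref μs νs ≤ J G η π₁ref π₂ref μs ν)

namespace Stmt6
set_option linter.unusedSectionVars false

section KL
variable {A : Type*} [Fintype A]

lemma mul_log_div (x c : ℝ) (hc : c ≠ 0) :
    x * Real.log (x / c) = x * Real.log x - x * Real.log c := by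
  rcases eq_or_ne x 0 with rfl | hx
  · simp
  · rw [Real.log_div hx hc]; ring

lemma KLdiv_eq (p q : A → ℝ) (hq : ∀ a, q a ≠ 0) :
    KLdiv p q = ∑ a, (p a * Real.log (p a) - p a * Real.log (q a)) :=
  Finset.sum_congr rfl fun a _ => mul_log_div _ _ (hq a)

lemma KLdiv_self (p : A → ℝ) : KLdiv p p = 0 := by
  refine Finset.sum_eq_zero fun a _ => ?_
  rcases eq_or_ne (p a) 0 with h | h
  · simp [h]
  · rw [div_self h]; simp

lemma KLdiv_term_ge {p q : A → ℝ} (hp : ∀ a, 0 ≤ p a) (hq : ∀ a, 0 < q a) (a : A) :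
    p a - q a ≤ p a * Real.log (p a / q a) := by
  rcases eq_or_lt_of_le (hp a) with h | h
  · simp [← h]
    exact (hq a).le
  · have h1 : Real.log (q a / p a) ≤ q a / p a - 1 :=
      Real.log_le_sub_one_of_pos (div_pos (hq a) h)
    have h2 : Real.log (p a / q a) = - Real.log (q a / p a) := by
      rw [← Real.log_inv]
      congr 1
      field_simp
    have h3 : p a * (q a / p a) = q a := by field_simp
    nlinarith

lemma KLdiv_nonneg {p q : A → ℝ} (hp : IsSimplex p) (hq : IsSimplex q)
    (hqpos : ∀ a, 0 < q a) : 0 ≤ KLdiv p q := by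
  calc (0:ℝ) = ∑ a, (p a - q a) := by rw [Finset.sum_sub_distrib, hp.2, hq.2]; ring
  _ ≤ _ := Finset.sum_le_sum fun a _ => KLdiv_term_ge hp.1 hqpos a

lemma KLdiv_pos {p q : A → ℝ} (hp : IsSimplex p) (hq : IsSimplex q)
    (hqpos : ∀ a, 0 < q a) (hne : p ≠ q) : 0 < KLdiv p q := by
  obtain ⟨a₀, ha₀⟩ : ∃ a, p a ≠ q a := by
    by_contra h
    push_neg at h
    exact hne (funext h)
  calc (0:ℝ) = ∑ a, (p a - q a) := by rw [Finset.sum_sub_distrib, hp.2, hq.2]; ring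
  _ < _ := by
    refine Finset.sum_lt_sum (fun a _ => KLdiv_term_ge hp.1 hqpos a) ⟨a₀, mem_univ a₀, ?_⟩
    rcases eq_or_lt_of_le (hp.1 a₀) with h | h
    · have hz : p a₀ * Real.log (p a₀ / q a₀) = 0 := by simp [← h]
      rw [hz]
      simp only [← h] at ha₀ ⊢
      have := hqpos a₀
      cases lt_or_gt_of_ne ha₀ <;> linarith
    · have hne1 : q a₀ / p a₀ ≠ 1 := by
        intro hc
        rw [div_eq_one_iff_eq h.ne'] at hc
        exact ha₀ hc.symm
      have h1 : Real.log (q a₀ / p a₀) < q a₀ / p a₀ - 1 :=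
        Real.log_lt_sub_one_of_pos (div_pos (hqpos a₀) h) hne1
      have h2 : Real.log (p a₀ / q a₀) = - Real.log (q a₀ / p a₀) := by
        rw [← Real.log_inv]; congr 1; field_simp
      have h3 : p a₀ * (q a₀ / p a₀) = q a₀ := by field_simp
      nlinarith

noncomputable def gibbsZ (ref w : A → ℝ) : ℝ := ∑ a, ref a * Real.exp (w a)

noncomputable def gibbs (ref w : A → ℝ) : A → ℝ :=
  fun a => ref a * Real.exp (w a) / gibbsZ ref w

variable [Nonempty A]

lemma gibbsZ_pos {ref : A → ℝ} (href : ∀ a, 0 < ref a) (w : A → ℝ) :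
    0 < gibbsZ ref w :=
  Finset.sum_pos (fun a _ => mul_pos (href a) (Real.exp_pos _)) univ_nonempty

lemma gibbs_pos {ref : A → ℝ} (href : ∀ a, 0 < ref a) (w : A → ℝ) (a : A) :
    0 < gibbs ref w a :=
  div_pos (mul_pos (href a) (Real.exp_pos _)) (gibbsZ_pos href w)

lemma gibbs_isSimplex {ref : A → ℝ} (href : ∀ a, 0 < ref a) (w : A → ℝ) :
    IsSimplex (gibbs ref w) := by
  refine ⟨fun a => (gibbs_pos href w a).le, ?_⟩
  unfold gibbs
  rw [← Finset.sum_div]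
  exact div_self (gibbsZ_pos href w).ne'

lemma log_gibbs {ref : A → ℝ} (href : ∀ a, 0 < ref a) (w : A → ℝ) (a : A) :
    Real.log (gibbs ref w a)
      = Real.log (ref a) + w a - Real.log (gibbsZ ref w) := by
  unfold gibbs
  rw [Real.log_div (mul_pos (href a) (Real.exp_pos _)).ne' (gibbsZ_pos href w).ne',
    Real.log_mul (href a).ne' (Real.exp_pos _).ne', Real.log_exp]

lemma gibbs_identity {ref : A → ℝ} (href : ∀ a, 0 < ref a) (w : A → ℝ)
    {p : A → ℝ} (hp : IsSimplex p) :
    (∑ a, p a * w a) - KLdiv p ref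
      = Real.log (gibbsZ ref w) - KLdiv p (gibbs ref w) := by
  have hterm : ∀ a, p a * w a - p a * Real.log (p a / ref a)
      = p a * Real.log (gibbsZ ref w) - p a * Real.log (p a / gibbs ref w a) := by
    intro a
    rw [mul_log_div _ _ (href a).ne', mul_log_div _ _ (gibbs_pos href w a).ne',
      log_gibbs href w a]
    ring
  calc (∑ a, p a * w a) - KLdiv p ref
      = ∑ a, (p a * w a - p a * Real.log (p a / ref a)) := by
        rw [Finset.sum_sub_distrib]; rfl
    _ = ∑ a, (p a * Real.log (gibbsZ ref w) - p a * Real.log (p a / gibbs ref w a)) :=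
        Finset.sum_congr rfl fun a _ => hterm a
    _ = Real.log (gibbsZ ref w) - KLdiv p (gibbs ref w) := by
        rw [Finset.sum_sub_distrib, ← Finset.sum_mul, hp.2, one_mul]; rfl

lemma continuous_KL₁ (q : A → ℝ) (hq : ∀ a, q a ≠ 0) :
    Continuous fun p : A → ℝ => KLdiv p q := by
  have he : (fun p : A → ℝ => KLdiv p q)
      = fun p => ∑ a, (p a * Real.log (p a) - p a * Real.log (q a)) :=
    funext fun p => KLdiv_eq p q hq
  rw [he]
  exact continuous_finset_sum _ fun a _ =>
    (Real.continuous_mul_log.comp (continuous_apply a)).sub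
      ((continuous_apply a).mul continuous_const)

lemma isCompact_simplex : IsCompact {p : A → ℝ | IsSimplex p} := by
  have hsub : {p : A → ℝ | IsSimplex p} ⊆ Set.univ.pi (fun _ : A => Set.Icc (0:ℝ) 1) := by
    intro p hp a _
    exact ⟨hp.1 a, by rw [← hp.2]; exact Finset.single_le_sum (fun b _ => hp.1 b) (mem_univ a)⟩
  have hclosed : IsClosed {p : A → ℝ | IsSimplex p} := by
    have h1 : {p : A → ℝ | IsSimplex p}
        = (⋂ a, {p : A → ℝ | 0 ≤ p a}) ∩ {p : A → ℝ | ∑ a, p a = 1} := by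
      ext p
      simp [IsSimplex, Set.mem_iInter, forall_and]
    rw [h1]
    exact ((isClosed_iInter fun a => isClosed_le continuous_const (continuous_apply a))).inter
      (isClosed_eq (continuous_finset_sum _ fun a _ => continuous_apply a) continuous_const)
  exact (isCompact_univ_pi fun _ => isCompact_Icc).of_isClosed_subset hclosed hsub

lemma convex_comb_simplex {p q : A → ℝ} (hp : IsSimplex p) (hq : IsSimplex q)
    {t : ℝ} (ht0 : 0 ≤ t) (ht1 : t ≤ 1) :
    IsSimplex (fun a => (1 - t) * p a + t * q a) := by
  constructor
  · intro a
    have h1 := hp.1 a; have h2 := hq.1 a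
    dsimp only
    nlinarith
  · rw [Finset.sum_add_distrib, ← Finset.mul_sum, ← Finset.mul_sum, hp.2, hq.2]
    ring

lemma KLdiv_convex₁ (q : A → ℝ) (hq : ∀ a, q a ≠ 0) {p p' : A → ℝ}
    (hp : ∀ a, 0 ≤ p a) (hp' : ∀ a, 0 ≤ p' a) {t : ℝ} (ht0 : 0 ≤ t) (ht1 : t ≤ 1) :
    KLdiv (fun a => (1 - t) * p a + t * p' a) q
      ≤ (1 - t) * KLdiv p q + t * KLdiv p' q := by
  rw [KLdiv_eq _ _ hq, KLdiv_eq _ _ hq, KLdiv_eq _ _ hq, Finset.mul_sum, Finset.mul_sum,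
    ← Finset.sum_add_distrib]
  refine Finset.sum_le_sum fun a _ => ?_
  have hconv := Real.convexOn_mul_log.2 (Set.mem_Ici.2 (hp a)) (Set.mem_Ici.2 (hp' a))
    (by linarith : (0:ℝ) ≤ 1 - t) ht0 (by ring)
  simp only [smul_eq_mul] at hconv
  nlinarith [hconv]

end KL

section Game
variable {A₁ A₂ : Type*} [Fintype A₁] [Fintype A₂] [Nonempty A₁] [Nonempty A₂]
variable (G : A₁ × A₂ → ℝ) (η : ℝ) (π₁ref : A₁ → ℝ) (π₂ref : A₂ → ℝ)

def rowv (μ : A₁ → ℝ) : A₂ → ℝ := fun a₂ => ∑ a₁, μ a₁ * G (a₁, a₂)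
def colv (ν : A₂ → ℝ) : A₁ → ℝ := fun a₁ => ∑ a₂, ν a₂ * G (a₁, a₂)

noncomputable def br₁ (ν : A₂ → ℝ) : A₁ → ℝ :=
  gibbs π₁ref (fun a₁ => η * colv G ν a₁)
noncomputable def br₂ (μ : A₁ → ℝ) : A₂ → ℝ :=
  gibbs π₂ref (fun a₂ => -η * rowv G μ a₂)

lemma br₁_isSimplex (h₁pos : ∀ a, 0 < π₁ref a) (ν : A₂ → ℝ) :
    IsSimplex (br₁ G η π₁ref ν) := gibbs_isSimplex h₁pos _

lemma br₁_pos (h₁pos : ∀ a, 0 < π₁ref a) (ν : A₂ → ℝ) (a : A₁) :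
    0 < br₁ G η π₁ref ν a := gibbs_pos h₁pos _ a

lemma br₂_isSimplex (h₂pos : ∀ a, 0 < π₂ref a) (μ : A₁ → ℝ) :
    IsSimplex (br₂ G η π₂ref μ) := gibbs_isSimplex h₂pos _

lemma br₂_pos (h₂pos : ∀ a, 0 < π₂ref a) (μ : A₁ → ℝ) (a : A₂) :
    0 < br₂ G η π₂ref μ a := gibbs_pos h₂pos _ a

lemma J_eq_col (μ : A₁ → ℝ) (ν : A₂ → ℝ) :
    J G η π₁ref π₂ref μ ν
      = (∑ a₁, μ a₁ * colv G ν a₁) - η⁻¹ * KLdiv μ π₁ref + η⁻¹ * KLdiv ν π₂ref := by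
  unfold J colv
  congr 2
  refine Finset.sum_congr rfl fun a₁ _ => ?_
  rw [Finset.mul_sum]
  exact Finset.sum_congr rfl fun a₂ _ => (mul_assoc _ _ _)

lemma J_eq_row (μ : A₁ → ℝ) (ν : A₂ → ℝ) :
    J G η π₁ref π₂ref μ ν
      = (∑ a₂, ν a₂ * rowv G μ a₂) - η⁻¹ * KLdiv μ π₁ref + η⁻¹ * KLdiv ν π₂ref := by
  unfold J rowv
  congr 2
  rw [Finset.sum_comm]
  refine Finset.sum_congr rfl fun a₂ _ => ?_
  rw [Finset.mul_sum]
  exact Finset.sum_congr rfl fun a₁ _ => by ring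

lemma J_left (hη : 0 < η) (h₁pos : ∀ a, 0 < π₁ref a) (ν : A₂ → ℝ) {μ : A₁ → ℝ}
    (hμ : IsSimplex μ) :
    J G η π₁ref π₂ref μ ν
      = J G η π₁ref π₂ref (br₁ G η π₁ref ν) ν
        - η⁻¹ * KLdiv μ (br₁ G η π₁ref ν) := by
  have h1 := gibbs_identity h₁pos (fun a₁ => η * colv G ν a₁) hμ
  have h2 := gibbs_identity h₁pos (fun a₁ => η * colv G ν a₁)
    (gibbs_isSimplex h₁pos (fun a₁ => η * colv G ν a₁))
  rw [KLdiv_self] at h2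
  have e1 : ∀ p : A₁ → ℝ, ∑ a, p a * (η * colv G ν a) = η * ∑ a, p a * colv G ν a := by
    intro p
    rw [Finset.mul_sum]
    exact Finset.sum_congr rfl fun a _ => by ring
  rw [e1] at h1 h2
  rw [J_eq_col, J_eq_col]
  unfold br₁ at *
  set g := gibbs π₁ref (fun a₁ => η * colv G ν a₁)
  have hne := hη.ne'
  field_simp at h1 h2 ⊢
  nlinarith [h1, h2]

lemma J_right (hη : 0 < η) (h₂pos : ∀ a, 0 < π₂ref a) (μ : A₁ → ℝ) {ν : A₂ → ℝ}
    (hν : IsSimplex ν) :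
    J G η π₁ref π₂ref μ ν
      = J G η π₁ref π₂ref μ (br₂ G η π₂ref μ)
        + η⁻¹ * KLdiv ν (br₂ G η π₂ref μ) := by
  have h1 := gibbs_identity h₂pos (fun a₂ => -η * rowv G μ a₂) hν
  have h2 := gibbs_identity h₂pos (fun a₂ => -η * rowv G μ a₂)
    (gibbs_isSimplex h₂pos (fun a₂ => -η * rowv G μ a₂))
  rw [KLdiv_self] at h2
  have e1 : ∀ p : A₂ → ℝ, ∑ a, p a * (-η * rowv G μ a) = -η * ∑ a, p a * rowv G μ a := by
    intro p
    rw [Finset.mul_sum]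
    exact Finset.sum_congr rfl fun a _ => by ring
  rw [e1] at h1 h2
  rw [J_eq_row, J_eq_row]
  unfold br₂ at *
  set g := gibbs π₂ref (fun a₂ => -η * rowv G μ a₂)
  have hne := hη.ne'
  field_simp at h1 h2 ⊢
  nlinarith [h1, h2]

lemma continuous_J (h₁ : ∀ a, π₁ref a ≠ 0) (h₂ : ∀ a, π₂ref a ≠ 0) :
    Continuous fun pr : (A₁ → ℝ) × (A₂ → ℝ) => J G η π₁ref π₂ref pr.1 pr.2 := by
  unfold J
  refine (Continuous.sub ?_ ?_).add ?_
  · exact continuous_finset_sum _ fun a₁ _ => continuous_finset_sum _ fun a₂ _ =>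
      (((continuous_apply a₁).comp continuous_fst).mul
        ((continuous_apply a₂).comp continuous_snd)).mul continuous_const
  · exact continuous_const.mul ((continuous_KL₁ π₁ref h₁).comp continuous_fst)
  · exact continuous_const.mul ((continuous_KL₁ π₂ref h₂).comp continuous_snd)

lemma continuous_br₂ (h₂pos : ∀ a, 0 < π₂ref a) : Continuous (br₂ G η π₂ref) := by
  have hw : ∀ b, Continuous fun μ : A₁ → ℝ => -η * rowv G μ b := by
    intro b
    unfold rowv
    exact continuous_const.mul
      (continuous_finset_sum _ fun a₁ _ => (continuous_apply a₁).mul continuous_const)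
  have hZ : Continuous fun μ : A₁ → ℝ => gibbsZ π₂ref (fun b => -η * rowv G μ b) := by
    unfold gibbsZ
    exact continuous_finset_sum _ fun b _ =>
      continuous_const.mul (Real.continuous_exp.comp (hw b))
  refine continuous_pi fun a₂ => ?_
  exact (continuous_const.mul (Real.continuous_exp.comp (hw a₂))).div hZ
    (fun μ => (gibbsZ_pos h₂pos _).ne')

lemma J_concave (hη : 0 < η) (h₁ : ∀ a, π₁ref a ≠ 0)
    {μ₀ μ₁ : A₁ → ℝ} (h₀ : ∀ a, 0 ≤ μ₀ a) (h₁' : ∀ a, 0 ≤ μ₁ a) (ν : A₂ → ℝ)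
    {t : ℝ} (ht0 : 0 ≤ t) (ht1 : t ≤ 1) :
    (1 - t) * J G η π₁ref π₂ref μ₀ ν + t * J G η π₁ref π₂ref μ₁ ν
      ≤ J G η π₁ref π₂ref (fun a => (1 - t) * μ₀ a + t * μ₁ a) ν := by
  rw [J_eq_row, J_eq_row, J_eq_row]
  have hrow : ∀ a₂, rowv G (fun a => (1 - t) * μ₀ a + t * μ₁ a) a₂
      = (1 - t) * rowv G μ₀ a₂ + t * rowv G μ₁ a₂ := by
    intro a₂
    unfold rowv
    rw [Finset.mul_sum, Finset.mul_sum, ← Finset.sum_add_distrib]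
    exact Finset.sum_congr rfl fun a _ => by ring
  have hbil : ∑ a₂, ν a₂ * rowv G (fun a => (1 - t) * μ₀ a + t * μ₁ a) a₂
      = (1 - t) * (∑ a₂, ν a₂ * rowv G μ₀ a₂) + t * (∑ a₂, ν a₂ * rowv G μ₁ a₂) := by
    rw [Finset.mul_sum, Finset.mul_sum, ← Finset.sum_add_distrib]
    exact Finset.sum_congr rfl fun a₂ _ => by rw [hrow]; ring
  rw [hbil]
  have hKL := KLdiv_convex₁ π₁ref h₁ h₀ h₁' ht0 ht1
  have hinv : (0:ℝ) ≤ η⁻¹ := by positivity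
  nlinarith [mul_le_mul_of_nonneg_left hKL hinv]

end Game
end Stmt6

open Stmt6 in
set_option maxHeartbeats 1000000 in
/-- the KL-regularized zero-sum game objective admits a saddle point,
the saddle point is unique, and both of its components are strictly positive. -/
theorem stmt6 {A₁ A₂ : Type*} [Fintype A₁] [Fintype A₂] [Nonempty A₁] [Nonempty A₂]
    (G : A₁ × A₂ → ℝ) (η : ℝ) (hη : 0 < η)
    (π₁ref : A₁ → ℝ) (π₂ref : A₂ → ℝ)
    (h₁ : IsSimplex π₁ref) (h₂ : IsSimplex π₂ref)
    (h₁pos : ∀ a, 0 < π₁ref a) (h₂pos : ∀ a, 0 < π₂ref a) :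
    ∃ μs : A₁ → ℝ, ∃ νs : A₂ → ℝ,
      IsSaddle G η π₁ref π₂ref μs νs ∧
      (∀ a₁, 0 < μs a₁) ∧ (∀ a₂, 0 < νs a₂) ∧
      (∀ μ' : A₁ → ℝ, ∀ ν' : A₂ → ℝ,
        IsSaddle G η π₁ref π₂ref μ' ν' → μ' = μs ∧ ν' = νs) := by
  classical
  have h₁ne : ∀ a, π₁ref a ≠ 0 := fun a => (h₁pos a).ne'
  have h₂ne : ∀ a, π₂ref a ≠ 0 := fun a => (h₂pos a).ne'
  set Bν := br₂ G η π₂ref with hBν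
  set φ : (A₁ → ℝ) → ℝ := fun μ => J G η π₁ref π₂ref μ (Bν μ) with hφ
  have hφc : Continuous φ :=
    (continuous_J G η π₁ref π₂ref h₁ne h₂ne).comp
      (continuous_id.prodMk (continuous_br₂ G η π₂ref h₂pos))
  obtain ⟨μs, hμsS, hmax⟩ :=
    isCompact_simplex.exists_isMaxOn ⟨π₁ref, h₁⟩ hφc.continuousOn
  have hμs : IsSimplex μs := hμsS
  set νs := Bν μs with hνsdef
  have hνs : IsSimplex νs := br₂_isSimplex G η π₂ref h₂pos μs
  have hνspos : ∀ a, 0 < νs a := br₂_pos G η π₂ref h₂pos μs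
  -- right inequality
  have hR : ∀ ν, IsSimplex ν → J G η π₁ref π₂ref μs νs ≤ J G η π₁ref π₂ref μs ν := by
    intro ν hν
    rw [J_right G η π₁ref π₂ref hη h₂pos μs hν]
    have h0 := KLdiv_nonneg hν (br₂_isSimplex G η π₂ref h₂pos μs) (br₂_pos G η π₂ref h₂pos μs)
    have hi : (0:ℝ) ≤ η⁻¹ := by positivity
    nlinarith
  -- left inequality
  have hL : ∀ μ, IsSimplex μ → J G η π₁ref π₂ref μ νs ≤ J G η π₁ref π₂ref μs νs := by
    intro μ hμ
    set m : ℝ → A₁ → ℝ := fun t a => (1 - t) * μs a + t * μ a with hm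
    have key : ∀ t ∈ Set.Ioc (0:ℝ) 1,
        J G η π₁ref π₂ref μ (Bν (m t)) ≤ φ μs := by
      intro t ht
      have hmt : IsSimplex (m t) := convex_comb_simplex hμs hμ ht.1.le ht.2
      have hφt : φ (m t) ≤ φ μs := hmax hmt
      have hconc := J_concave G η π₁ref π₂ref hη h₁ne hμs.1 hμ.1 (Bν (m t)) ht.1.le ht.2
      have hlow : φ μs ≤ J G η π₁ref π₂ref μs (Bν (m t)) :=
        hR _ (br₂_isSimplex G η π₂ref h₂pos (m t))
      have hphimt : φ (m t) = J G η π₁ref π₂ref (m t) (Bν (m t)) := rfl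
      have h5 : t * J G η π₁ref π₂ref μ (Bν (m t)) ≤ t * φ μs := by
        have ht1 : (0:ℝ) ≤ 1 - t := by linarith [ht.2]
        nlinarith [mul_le_mul_of_nonneg_left hlow ht1]
      exact le_of_mul_le_mul_left h5 ht.1
    have hmcont : Continuous m := by
      refine continuous_pi fun a => ?_
      exact ((continuous_const.sub continuous_id).mul continuous_const).add
        (continuous_id.mul continuous_const)
    have hcont : Continuous fun t : ℝ => J G η π₁ref π₂ref μ (Bν (m t)) :=
      (continuous_J G η π₁ref π₂ref h₁ne h₂ne).comp
        (continuous_const.prodMk ((continuous_br₂ G η π₂ref h₂pos).comp hmcont))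
    have hm0 : m 0 = μs := by funext a; simp [hm]
    have hlim : J G η π₁ref π₂ref μ (Bν (m 0)) ≤ φ μs := by
      have htend : Filter.Tendsto (fun t => J G η π₁ref π₂ref μ (Bν (m t)))
          (nhdsWithin 0 (Set.Ioi 0)) (nhds (J G η π₁ref π₂ref μ (Bν (m 0)))) :=
        (hcont.tendsto 0).mono_left nhdsWithin_le_nhds
      refine le_of_tendsto htend ?_
      filter_upwards [Ioc_mem_nhdsGT_of_mem (Set.mem_Ico.mpr ⟨le_refl 0, zero_lt_one⟩)]
        with t ht using key t ht
    rw [hm0] at hlim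
    exact hlim
  -- μs is the best response to νs, hence positive
  have hμseq : μs = br₁ G η π₁ref νs := by
    by_contra hne
    have hk := KLdiv_pos hμs (br₁_isSimplex G η π₁ref h₁pos νs) (br₁_pos G η π₁ref h₁pos νs) hne
    have h1 := J_left G η π₁ref π₂ref hη h₁pos νs hμs
    have h2 : J G η π₁ref π₂ref (br₁ G η π₁ref νs) νs ≤ J G η π₁ref π₂ref μs νs :=
      hL _ (br₁_isSimplex G η π₁ref h₁pos νs)
    have hi : (0:ℝ) < η⁻¹ := by positivity
    nlinarith
  have hμspos : ∀ a, 0 < μs a := by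
    rw [hμseq]; exact br₁_pos G η π₁ref h₁pos νs
  refine ⟨μs, νs, ⟨hμs, hνs, hL, hR⟩, hμspos, hνspos, ?_⟩
  -- uniqueness
  rintro μ' ν' ⟨hμ', hν', hL', hR'⟩
  have c1 : J G η π₁ref π₂ref μs ν' ≤ J G η π₁ref π₂ref μ' ν' := hL' μs hμs
  have c2 : J G η π₁ref π₂ref μ' ν' ≤ J G η π₁ref π₂ref μ' νs := hR' νs hνs
  have c3 : J G η π₁ref π₂ref μ' νs ≤ J G η π₁ref π₂ref μs νs := hL μ' hμ'
  have c4 : J G η π₁ref π₂ref μs νs ≤ J G η π₁ref π₂ref μs ν' := hR ν' hν'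
  have e1 : J G η π₁ref π₂ref μ' νs = J G η π₁ref π₂ref μs νs := by linarith
  have e2 : J G η π₁ref π₂ref μs ν' = J G η π₁ref π₂ref μs νs := by linarith
  have hi : (0:ℝ) < η⁻¹ := by positivity
  constructor
  · by_contra hne
    have hne' : μ' ≠ br₁ G η π₁ref νs := by rw [← hμseq]; exact hne
    have hk := KLdiv_pos hμ' (br₁_isSimplex G η π₁ref h₁pos νs) (br₁_pos G η π₁ref h₁pos νs) hne'
    have h1 := J_left G η π₁ref π₂ref hη h₁pos νs hμ'
    have h1s := J_left G η π₁ref π₂ref hη h₁pos νs hμs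
    have hks : KLdiv μs (br₁ G η π₁ref νs) = 0 := by
      rw [← hμseq]
      exact KLdiv_self μs
    nlinarith
  · by_contra hne
    have hne' : ν' ≠ br₂ G η π₂ref μs := hne
    have hk := KLdiv_pos hν' (br₂_isSimplex G η π₂ref h₂pos μs) (br₂_pos G η π₂ref h₂pos μs) hne'
    have h1 := J_right G η π₁ref π₂ref hη h₂pos μs hν'
    have hveq : J G η π₁ref π₂ref μs (br₂ G η π₂ref μs) = J G η π₁ref π₂ref μs νs := rfl
    nlinarith
end

section
/- Let A₁, A₂ be finite nonempty sets, G : A₁ × A₂ → ℝ, η > 0, and π₁ʳᵉᶠ ∈ Δ(A₁), π₂ʳᵉᶠ ∈ Δ(A₂) strictly positive. If (μ*, ν*) is a saddle point of J_G, then its components have the Gibbs form: μ*(a₁) = π₁ʳᵉᶠ(a₁)·exp(η·q₁(a₁)) / Σ_{b₁} π₁ʳᵉᶠ(b₁)·exp(η·q₁(b₁)) where q₁(a₁) = Σ_{a₂} ν*(a₂)G(a₁,a₂), and ν*(a₂) = π₂ʳᵉᶠ(a₂)·exp(−η·q₂(a₂)) / Σ_{b₂} π₂ʳᵉᶠ(b₂)·exp(−η·q₂(b₂))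 where q₂(a₂) = Σ_{a₁} μ*(a₁)G(a₁,a₂). -/
open Finset

section Aux

variable {A : Type*} [Fintype A]

lemma klAux_pointwise {p q : A → ℝ} (hp : 0 ≤ p) (hq : ∀ a, 0 < q a) (a : A) :
    p a - q a ≤ p a * Real.log (p a / q a) := by
  rcases eq_or_lt_of_le (hp a) with h | h
  · rw [← h]
    simpa using le_of_lt (hq a)
  · have hx : 0 < q a / p a := div_pos (hq a) h
    have := Real.log_le_sub_one_of_pos hx
    have hlog : Real.log (p a / q a) = - Real.log (q a / p a) := by
      rw [← Real.log_inv]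
      congr 1
      field_simp
    rw [hlog]
    have hpne : p a ≠ 0 := ne_of_gt h
    have h2 : p a * Real.log (q a / p a) ≤ p a * (q a / p a - 1) :=
      mul_le_mul_of_nonneg_left this (le_of_lt h)
    have h3 : p a * (q a / p a - 1) = q a - p a := by field_simp <;> ring
    nlinarith

lemma eq_of_klDiv_nonpos {p q : A → ℝ} (hp : IsSimplex p) (hq : IsSimplex q)
    (hqpos : ∀ a, 0 < q a) (h : KLdiv p q ≤ 0) : p = q := by
  have hle : ∀ a ∈ Finset.univ, p a - q a ≤ p a * Real.log (p a / q a) :=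
    fun a _ => klAux_pointwise hp.1 hqpos a
  have hsum0 : ∑ a, (p a - q a) = (0 : ℝ) := by
    rw [Finset.sum_sub_distrib, hp.2, hq.2]; ring
  have hsumle : ∑ a, p a * Real.log (p a / q a) ≤ ∑ a, (p a - q a) := by
    rw [hsum0]; exact h
  have heq : ∑ a, (p a - q a) = ∑ a, p a * Real.log (p a / q a) :=
    le_antisymm (Finset.sum_le_sum hle) (by rw [hsum0]; exact h)
  have hall := (Finset.sum_eq_sum_iff_of_le hle).mp heq
  funext a
  have ha := hall a (Finset.mem_univ a)
  rcases eq_or_lt_of_le (hp.1 a) with h0 | h0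
  · exfalso
    rw [← h0] at ha
    simp at ha
    exact (hqpos a).ne' ha
  · by_contra hne
    have hx : 0 < q a / p a := div_pos (hqpos a) h0
    have hx1 : q a / p a ≠ 1 := by
      intro h1
      field_simp at h1
      exact hne h1.symm
    have hlt := Real.log_lt_sub_one_of_pos hx hx1
    have hlog : Real.log (p a / q a) = - Real.log (q a / p a) := by
      rw [← Real.log_inv]; congr 1; field_simp
    rw [hlog] at ha
    have hpne : p a ≠ 0 := ne_of_gt h0
    have h2 : p a * Real.log (q a / p a) < p a * (q a / p a - 1) :=
      mul_lt_mul_of_pos_left hlt h0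
    have h3 : p a * (q a / p a - 1) = q a - p a := by field_simp <;> ring
    nlinarith

/-- Gibbs variational principle: the maximizer of `⟨μ,q⟩ - η⁻¹ KL(μ‖π)` over the
simplex is the Gibbs distribution. -/
lemma gibbs_of_max [Nonempty A] (η : ℝ) (hη : 0 < η) (π : A → ℝ) (hπ : IsSimplex π)
    (hπpos : ∀ a, 0 < π a) (q : A → ℝ) (p : A → ℝ) (hp : IsSimplex p)
    (hmax : ∀ μ : A → ℝ, IsSimplex μ →
      (∑ a, μ a * q a) - η⁻¹ * KLdiv μ π ≤ (∑ a, p a * q a) - η⁻¹ * KLdiv p π) :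
    ∀ a, p a = π a * Real.exp (η * q a) / ∑ b, π b * Real.exp (η * q b) := by
  classical
  set Z : ℝ := ∑ b, π b * Real.exp (η * q b) with hZ
  have hZpos : 0 < Z := by
    apply Finset.sum_pos
    · intro b _
      exact mul_pos (hπpos b) (Real.exp_pos _)
    · exact Finset.univ_nonempty
  set g : A → ℝ := fun a => π a * Real.exp (η * q a) / Z with hg
  have hgpos : ∀ a, 0 < g a := fun a =>
    div_pos (mul_pos (hπpos a) (Real.exp_pos _)) hZpos
  have hgsimplex : IsSimplex g := by
    constructor
    · exact fun a => le_of_lt (hgpos a)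
    · rw [hg]
      simp only
      rw [← Finset.sum_div]
      rw [← hZ]
      field_simp
  -- identity: for simplex μ, KLdiv μ g = KLdiv μ π - η * Σ μ q + log Z
  have hident : ∀ μ : A → ℝ, IsSimplex μ →
      KLdiv μ g = KLdiv μ π - η * (∑ a, μ a * q a) + Real.log Z := by
    intro μ hμ
    have hpt : ∀ a, μ a * Real.log (μ a / g a)
        = μ a * Real.log (μ a / π a) - η * (μ a * q a) + μ a * Real.log Z := by
      intro a
      rcases eq_or_lt_of_le (hμ.1 a) with h0 | h0
      · simp [← h0]
      · have hμne : μ a ≠ 0 := ne_of_gt h0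
        have hπne : π a ≠ 0 := ne_of_gt (hπpos a)
        have hZne : Z ≠ 0 := ne_of_gt hZpos
        have hexpne : Real.exp (η * q a) ≠ 0 := Real.exp_ne_zero _
        have h1 : μ a / g a = (μ a / π a) / Real.exp (η * q a) * Z := by
          rw [hg]; field_simp <;> ring
        rw [h1, Real.log_mul (by positivity) hZne, Real.log_div (by positivity) hexpne,
          Real.log_exp]
        ring
    unfold KLdiv
    rw [Finset.sum_congr rfl (fun a _ => hpt a)]
    rw [Finset.sum_add_distrib, Finset.sum_sub_distrib, ← Finset.mul_sum,
      ← Finset.sum_mul, hμ.2]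
    ring
  have hklg : KLdiv g g = 0 := by
    unfold KLdiv
    apply Finset.sum_eq_zero
    intro a _
    rw [div_self (ne_of_gt (hgpos a)), Real.log_one, mul_zero]
  -- from hmax applied to g
  have hFg := hmax g hgsimplex
  have hFp : (∑ a, p a * q a) - η⁻¹ * KLdiv p π
      = η⁻¹ * Real.log Z - η⁻¹ * KLdiv p g := by
    rw [hident p hp]
    field_simp
    ring
  have hFg2 : (∑ a, g a * q a) - η⁻¹ * KLdiv g π = η⁻¹ * Real.log Z := by
    have := hident g hgsimplex
    rw [hklg] at this
    have h2 : η * (∑ a, g a * q a) = KLdiv g π + Real.log Z := by linarith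
    field_simp
    linarith [h2]
  rw [hFp, hFg2] at hFg
  have hklnonpos : KLdiv p g ≤ 0 := by
    have hηinv : 0 < η⁻¹ := inv_pos.mpr hη
    nlinarith
  have := eq_of_klDiv_nonpos hp hgsimplex hgpos hklnonpos
  intro a
  rw [this]

end Aux

/-- Gibbs form of the components of any saddle point of the
KL-regularized zero-sum game objective. -/
theorem stmt7 {A₁ A₂ : Type*} [Fintype A₁] [Fintype A₂] [Nonempty A₁] [Nonempty A₂]
    (G : A₁ × A₂ → ℝ) (η : ℝ) (hη : 0 < η)
    (π₁ref : A₁ → ℝ) (π₂ref : A₂ → ℝ)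
    (h₁ : IsSimplex π₁ref) (h₂ : IsSimplex π₂ref)
    (h₁pos : ∀ a, 0 < π₁ref a) (h₂pos : ∀ a, 0 < π₂ref a)
    (μs : A₁ → ℝ) (νs : A₂ → ℝ)
    (hsaddle : IsSaddle G η π₁ref π₂ref μs νs) :
    (∀ a₁, μs a₁
      = π₁ref a₁ * Real.exp (η * ∑ a₂, νs a₂ * G (a₁, a₂))
        / ∑ b₁, π₁ref b₁ * Real.exp (η * ∑ a₂, νs a₂ * G (b₁, a₂))) ∧
    (∀ a₂, νs a₂
      = π₂ref a₂ * Real.exp (-η * ∑ a₁, μs a₁ * G (a₁, a₂))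
        / ∑ b₂, π₂ref b₂ * Real.exp (-η * ∑ a₁, μs a₁ * G (a₁, b₂))) := by
  obtain ⟨hμs, hνs, hL, hR⟩ := hsaddle
  constructor
  · -- μ side
    set q1 : A₁ → ℝ := fun a₁ => ∑ a₂, νs a₂ * G (a₁, a₂) with hq1
    apply gibbs_of_max η hη π₁ref h₁ h₁pos q1 μs hμs
    intro μ hμ
    have h := hL μ hμ
    unfold J at h
    have hd : ∀ ρ : A₁ → ℝ, (∑ a₁, ∑ a₂, ρ a₁ * νs a₂ * G (a₁, a₂)) = ∑ a₁, ρ a₁ * q1 a₁ := by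
      intro ρ
      apply Finset.sum_congr rfl
      intro a₁ _
      rw [hq1, Finset.mul_sum]
      apply Finset.sum_congr rfl
      intro a₂ _
      ring
    rw [hd μ, hd μs] at h
    linarith
  · -- ν side
    set q2 : A₂ → ℝ := fun a₂ => ∑ a₁, μs a₁ * G (a₁, a₂) with hq2
    have key := gibbs_of_max η hη π₂ref h₂ h₂pos (fun a₂ => -q2 a₂) νs hνs ?_
    · intro a₂
      have := key a₂
      simp only [mul_neg, ← neg_mul] at this
      exact this
    · intro ν hν
      have h := hR ν hν
      unfold J at h
      have hd : ∀ ρ : A₂ → ℝ, (∑ a₁, ∑ a₂, μs a₁ * ρ a₂ * G (a₁, a₂))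
          = ∑ a₂, ρ a₂ * q2 a₂ := by
        intro ρ
        rw [Finset.sum_comm]
        apply Finset.sum_congr rfl
        intro a₂ _
        rw [hq2, Finset.mul_sum]
        apply Finset.sum_congr rfl
        intro a₁ _
        ring
      rw [hd νs, hd ν] at h
      simp only [mul_neg, neg_mul, Finset.sum_neg_distrib]
      linarith
end

section
/- Let A₁, A₂ be finite nonempty sets, let Ĝ, G* : A₁ × A₂ → ℝ be two payoff matrices, let η > 0, and let π₁ʳᵉᶠ ∈ Δ(A₁), π₂ʳᵉᶠ ∈ Δ(A₂) be strictly positive. Let (μ̂, ν̂) be a saddle point of J_Ĝ and (μ*, ν*) a saddle point of J_{G*}. Then ‖μ̂ − μ*‖₁ + ‖ν̂ − ν*‖₁ ≤ 2η·ℰ, where ℰ = max( max_{a₁} |Σ_{a₂} ν*(a₂)·(Ĝ(a₁,a₂) − G*(a₁,a₂))| , max_{a₂} |Σ_{a₁} μ*(a₁)·(Ĝ(a₁,a₂) − G*(a₁,a₂))| ). In particular, ‖μ̂ − μ*‖₁ + ‖ν̂ − ν*‖₁ ≤ 2η·max_{a₁,a₂} |Ĝ(a₁,a₂) − G*(a₁,a₂)|.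 -/
/-!
Each component of a KL-regularized saddle point is a Gibbs best response:
`μ ∝ π₁ʳᵉᶠ · exp (η · G ν)` and `ν ∝ π₂ʳᵉᶠ · exp (-η · Gᵀ μ)`. For two Gibbs distributions
with payoff vectors `c`, `d` the normalizers cancel in the symmetrized divergence, so
`KL(p‖q) + KL(q‖p) = η ⟨p - q, c - d⟩`, and this dominates `‖p - q‖₁²` (the logarithmic mean
is at most the arithmetic mean, then Cauchy–Schwarz). Adding the identities of both players,
the bilinear terms cancel because the game is zero-sum, leaving only
`⟨μ̂ - μ*, (Ĝ - G*) ν*⟩ - ⟨ν̂ - ν*, (Ĝ - G*)ᵀ μ*⟩ ≤ ℰ (x + y)` with `x`, `y` the two ℓ¹ distances.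
Hence `x² + y² ≤ η ℰ (x + y)`, and `(x + y)² ≤ 2 (x² + y²)` gives `x + y ≤ 2 η ℰ`.
-/

open Finset

open Real InformationTheory

lemma two_mul_sq_le_mul_log_sub_log {x : ℝ} (hx : |x| < 1) :
    2 * x ^ 2 ≤ x * (log (1 + x) - log (1 - x)) := by
  -- every term of the series `x (log (1 + x) - log (1 - x)) = ∑ 2 x ^ (2k + 2) / (2k + 1)` is
  -- nonnegative, and the first one is `2 x²`
  have hs := (hasSum_log_sub_log_of_abs_lt_one hx).mul_left x
  calc 2 * x ^ 2 = x * (2 * (1 / (2 * ((0 : ℕ) : ℝ) + 1)) * x ^ (2 * 0 + 1)) := by norm_num; ring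
    _ ≤ x * (log (1 + x) - log (1 - x)) := le_hasSum hs 0 fun k _ => by
        have : x * x ^ (2 * k + 1) = (x ^ (k + 1)) ^ 2 := by ring
        rw [mul_left_comm, this]
        positivity

lemma two_mul_sq_div_le_mul_log_sub_log {p q : ℝ} (hp : 0 < p) (hq : 0 < q) :
    2 * (p - q) ^ 2 / (p + q) ≤ (p - q) * (log p - log q) := by
  have hpq : 0 < p + q := by positivity
  obtain ⟨x, hx_def⟩ : ∃ x, p - q = (p + q) * x := ⟨(p - q) / (p + q), by field_simp⟩
  have hx : |x| < 1 := by
    rw [abs_lt]; constructor <;> nlinarith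
  have hlog : log (1 + x) - log (1 - x) = log p - log q := by
    have h1 : 1 + x = 2 * p / (p + q) := by rw [eq_div_iff hpq.ne']; linarith
    have h2 : 1 - x = 2 * q / (p + q) := by rw [eq_div_iff hpq.ne']; linarith
    rw [h1, h2, log_div (by positivity) (by positivity), log_div (by positivity) (by positivity),
      log_mul two_ne_zero hp.ne', log_mul two_ne_zero hq.ne']
    ring
  have key := two_mul_sq_le_mul_log_sub_log hx
  rw [hlog] at key
  calc 2 * (p - q) ^ 2 / (p + q) = (p + q) * (2 * x ^ 2) := by
        rw [hx_def]; field_simp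
    _ ≤ (p + q) * (x * (log p - log q)) := by gcongr
    _ = (p - q) * (log p - log q) := by rw [hx_def]; ring

section KLdiv

variable {A : Type*} [Fintype A] {p q : A → ℝ}

lemma KLdiv_add_KLdiv (hp : ∀ a, 0 < p a) (hq : ∀ a, 0 < q a) :
    KLdiv p q + KLdiv q p = ∑ a, (p a - q a) * (log (p a) - log (q a)) := by
  rw [KLdiv, KLdiv, ← Finset.sum_add_distrib]
  refine Finset.sum_congr rfl fun a _ => ?_
  rw [log_div (hp a).ne' (hq a).ne', log_div (hq a).ne' (hp a).ne']
  ring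

lemma sq_sum_abs_sub_le_KLdiv_add_KLdiv (hp : IsSimplex p) (hq : IsSimplex q)
    (hp_pos : ∀ a, 0 < p a) (hq_pos : ∀ a, 0 < q a) :
    (∑ a, |p a - q a|) ^ 2 ≤ KLdiv p q + KLdiv q p := by
  have hsum : ∑ a, (p a + q a) = 2 := by
    rw [Finset.sum_add_distrib, hp.2, hq.2]; norm_num
  calc (∑ a, |p a - q a|) ^ 2
      = 2 * ((∑ a, |p a - q a|) ^ 2 / ∑ a, (p a + q a)) := by rw [hsum]; ring
    _ ≤ 2 * ∑ a, |p a - q a| ^ 2 / (p a + q a) := by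
        gcongr
        exact Finset.sq_sum_div_le_sum_sq_div _ _ fun a _ => add_pos (hp_pos a) (hq_pos a)
    _ = ∑ a, 2 * (p a - q a) ^ 2 / (p a + q a) := by
        simp only [Finset.mul_sum, sq_abs, mul_div_assoc]
    _ ≤ ∑ a, (p a - q a) * (log (p a) - log (q a)) :=
        Finset.sum_le_sum fun a _ => two_mul_sq_div_le_mul_log_sub_log (hp_pos a) (hq_pos a)
    _ = KLdiv p q + KLdiv q p := (KLdiv_add_KLdiv hp_pos hq_pos).symm

lemma KLdiv_self (p : A → ℝ) : KLdiv p p = 0 :=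
  Finset.sum_eq_zero fun a _ => by rcases eq_or_ne (p a) 0 with h | h <;> simp [h]

lemma KLdiv_eq_sum_mul_klFun (hq : ∀ a, 0 < q a) (h : ∑ a, p a = ∑ a, q a) :
    KLdiv p q = ∑ a, q a * klFun (p a / q a) := by
  have : ∀ a, q a * klFun (p a / q a) = p a * log (p a / q a) + (q a - p a) := fun a => by
    have := (hq a).ne'; rw [klFun_apply]; field_simp; ring
  simp only [this, Finset.sum_add_distrib, Finset.sum_sub_distrib, h, sub_self, add_zero, KLdiv]

lemma eq_of_KLdiv_nonpos (hp : IsSimplex p) (hq : IsSimplex q) (hq_pos : ∀ a, 0 < q a)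
    (h : KLdiv p q ≤ 0) : p = q := by
  have hterm : ∀ a ∈ Finset.univ, 0 ≤ q a * klFun (p a / q a) := fun a _ =>
    mul_nonneg (hq_pos a).le (klFun_nonneg (div_nonneg (hp.1 a) (hq_pos a).le))
  rw [KLdiv_eq_sum_mul_klFun hq_pos (hp.2.trans hq.2.symm)] at h
  have hzero :=
    (Finset.sum_eq_zero_iff_of_nonneg hterm).1 (le_antisymm h (Finset.sum_nonneg hterm))
  funext a
  have := (mul_eq_zero.1 (hzero a (Finset.mem_univ a))).resolve_left (hq_pos a).ne'
  rwa [klFun_eq_zero_iff (div_nonneg (hp.1 a) (hq_pos a).le),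
    div_eq_one_iff_eq (hq_pos a).ne'] at this

end KLdiv

noncomputable def gibbs {A : Type*} [Fintype A] (η : ℝ) (ρ c : A → ℝ) : A → ℝ :=
  fun a => ρ a * exp (η * c a) / ∑ b, ρ b * exp (η * c b)

section Gibbs

variable {A : Type*} [Fintype A] [Nonempty A] {η : ℝ} {ρ c : A → ℝ}

lemma sum_mul_exp_pos (hρ : ∀ a, 0 < ρ a) : 0 < ∑ b, ρ b * exp (η * c b) :=
  Finset.sum_pos (fun b _ => mul_pos (hρ b) (exp_pos _)) Finset.univ_nonempty

lemma gibbs_pos (hρ : ∀ a, 0 < ρ a) (a : A) : 0 < gibbs η ρ c a :=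
  div_pos (mul_pos (hρ a) (exp_pos _)) (sum_mul_exp_pos hρ)

lemma isSimplex_gibbs (hρ : ∀ a, 0 < ρ a) : IsSimplex (gibbs η ρ c) :=
  ⟨fun a => (gibbs_pos hρ a).le, by
    simp only [gibbs]; rw [← Finset.sum_div, div_self (sum_mul_exp_pos hρ).ne']⟩

lemma log_gibbs (hρ : ∀ a, 0 < ρ a) (a : A) :
    log (gibbs η ρ c a) = log (ρ a) + η * c a - log (∑ b, ρ b * exp (η * c b)) := by
  rw [gibbs, log_div (mul_pos (hρ a) (exp_pos _)).ne' (sum_mul_exp_pos hρ).ne',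
    log_mul (hρ a).ne' (exp_pos _).ne', log_exp]

/-- The Gibbs variational principle. -/
lemma sum_mul_sub_KLdiv_eq (hρ : ∀ a, 0 < ρ a) (hη : η ≠ 0) {μ : A → ℝ} (hμ : IsSimplex μ) :
    ∑ a, μ a * c a - η⁻¹ * KLdiv μ ρ
      = η⁻¹ * (log (∑ b, ρ b * exp (η * c b)) - KLdiv μ (gibbs η ρ c)) := by
  have hterm : ∀ a, μ a * log (μ a / gibbs η ρ c a)
      = μ a * log (μ a / ρ a) - η * (μ a * c a) + μ a * log (∑ b, ρ b * exp (η * c b)) := by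
    intro a
    rcases (hμ.1 a).eq_or_lt with h0 | hpos
    · simp [← h0]
    · rw [log_div hpos.ne' (gibbs_pos hρ a).ne', log_div hpos.ne' (hρ a).ne', log_gibbs hρ]
      ring
  have hKL : KLdiv μ (gibbs η ρ c)
      = KLdiv μ ρ - η * ∑ a, μ a * c a + log (∑ b, ρ b * exp (η * c b)) := by
    simp only [KLdiv, hterm, Finset.sum_add_distrib, Finset.sum_sub_distrib, ← Finset.mul_sum,
      ← Finset.sum_mul, hμ.2, one_mul]
  rw [hKL]
  field_simp
  ring

lemma eq_gibbs_of_forall_le (hρ : ∀ a, 0 < ρ a) (hη : 0 < η) {μ₀ : A → ℝ} (hμ₀ : IsSimplex μ₀)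
    (hmax : ∀ μ, IsSimplex μ →
      ∑ a, μ a * c a - η⁻¹ * KLdiv μ ρ ≤ ∑ a, μ₀ a * c a - η⁻¹ * KLdiv μ₀ ρ) :
    μ₀ = gibbs η ρ c := by
  have hg := isSimplex_gibbs (η := η) (c := c) hρ
  have h := hmax _ hg
  rw [sum_mul_sub_KLdiv_eq hρ hη.ne' hg, sum_mul_sub_KLdiv_eq hρ hη.ne' hμ₀, KLdiv_self] at h
  refine eq_of_KLdiv_nonpos hμ₀ hg (gibbs_pos hρ) ?_
  nlinarith [inv_pos.2 hη]

end Gibbs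

lemma KLdiv_gibbs_add_KLdiv_gibbs {A : Type*} [Fintype A] [Nonempty A] {η : ℝ} {ρ : A → ℝ}
    (hρ : ∀ a, 0 < ρ a) (c d : A → ℝ) :
    KLdiv (gibbs η ρ c) (gibbs η ρ d) + KLdiv (gibbs η ρ d) (gibbs η ρ c)
      = η * ∑ a, (gibbs η ρ c a - gibbs η ρ d a) * (c a - d a) := by
  set Zc := log (∑ b, ρ b * exp (η * c b))
  set Zd := log (∑ b, ρ b * exp (η * d b))
  have hmass : ∑ a, (gibbs η ρ c a - gibbs η ρ d a) = 0 := by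
    rw [Finset.sum_sub_distrib, (isSimplex_gibbs hρ).2, (isSimplex_gibbs hρ).2, sub_self]
  rw [KLdiv_add_KLdiv (gibbs_pos hρ) (gibbs_pos hρ)]
  calc ∑ a, (gibbs η ρ c a - gibbs η ρ d a) * (log (gibbs η ρ c a) - log (gibbs η ρ d a))
      = ∑ a, (η * ((gibbs η ρ c a - gibbs η ρ d a) * (c a - d a))
          - (Zc - Zd) * (gibbs η ρ c a - gibbs η ρ d a)) :=
        Finset.sum_congr rfl fun a _ => by rw [log_gibbs hρ, log_gibbs hρ]; ring
    _ = η * ∑ a, (gibbs η ρ c a - gibbs η ρ d a) * (c a - d a) := by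
        rw [Finset.sum_sub_distrib, ← Finset.mul_sum, ← Finset.mul_sum, hmass, mul_zero, sub_zero]

section Game

variable {A₁ A₂ : Type*} [Fintype A₁] [Fintype A₂]

def rowPayoff (G : A₁ × A₂ → ℝ) (ν : A₂ → ℝ) (a₁ : A₁) : ℝ := ∑ a₂, ν a₂ * G (a₁, a₂)

def colPayoff (G : A₁ × A₂ → ℝ) (μ : A₁ → ℝ) (a₂ : A₂) : ℝ := ∑ a₁, μ a₁ * G (a₁, a₂)

lemma sum_mul_rowPayoff (G : A₁ × A₂ → ℝ) (μ : A₁ → ℝ) (ν : A₂ → ℝ) :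
    ∑ a₁, μ a₁ * rowPayoff G ν a₁ = ∑ a₁, ∑ a₂, μ a₁ * ν a₂ * G (a₁, a₂) := by
  simp only [rowPayoff, Finset.mul_sum, mul_assoc]

lemma sum_mul_colPayoff (G : A₁ × A₂ → ℝ) (μ : A₁ → ℝ) (ν : A₂ → ℝ) :
    ∑ a₂, ν a₂ * colPayoff G μ a₂ = ∑ a₁, μ a₁ * rowPayoff G ν a₁ := by
  rw [sum_mul_rowPayoff, Finset.sum_comm]
  simp only [colPayoff, Finset.mul_sum]
  exact Finset.sum_congr rfl fun _ _ => Finset.sum_congr rfl fun _ _ => by ring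

lemma sum_sub_mul_payoff_sub_eq (Ĝ G : A₁ × A₂ → ℝ) (μ μ' : A₁ → ℝ) (ν ν' : A₂ → ℝ) :
    ∑ a₁, (μ a₁ - μ' a₁) * (rowPayoff Ĝ ν a₁ - rowPayoff G ν' a₁)
      + ∑ a₂, (ν a₂ - ν' a₂) * (colPayoff G μ' a₂ - colPayoff Ĝ μ a₂)
      = ∑ a₁, (μ a₁ - μ' a₁) * rowPayoff (Ĝ - G) ν' a₁
        - ∑ a₂, (ν a₂ - ν' a₂) * colPayoff (Ĝ - G) μ' a₂ := by
  simp only [mul_sub, Finset.sum_sub_distrib, sum_mul_colPayoff]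
  simp only [rowPayoff, Pi.sub_apply, Finset.mul_sum, ← Finset.sum_sub_distrib,
    ← Finset.sum_add_distrib]
  exact Finset.sum_congr rfl fun _ _ => Finset.sum_congr rfl fun _ _ => by ring

end Game

section Saddle

variable {A₁ A₂ : Type*} [Fintype A₁] [Fintype A₂] {G : A₁ × A₂ → ℝ} {η : ℝ}
  {ρ₁ : A₁ → ℝ} {ρ₂ : A₂ → ℝ} {μs : A₁ → ℝ} {νs : A₂ → ℝ}

lemma J_eq_rowPayoff (μ : A₁ → ℝ) (ν : A₂ → ℝ) :
    J G η ρ₁ ρ₂ μ ν = ∑ a₁, μ a₁ * rowPayoff G ν a₁ - η⁻¹ * KLdiv μ ρ₁ + η⁻¹ * KLdiv ν ρ₂ := by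
  rw [J, sum_mul_rowPayoff]

lemma IsSaddle.fst_eq_gibbs [Nonempty A₁] (h : IsSaddle G η ρ₁ ρ₂ μs νs) (hη : 0 < η)
    (hρ₁ : ∀ a, 0 < ρ₁ a) : μs = gibbs η ρ₁ (rowPayoff G νs) :=
  eq_gibbs_of_forall_le hρ₁ hη h.1 fun μ hμ => by
    have := h.2.2.1 μ hμ
    rw [J_eq_rowPayoff, J_eq_rowPayoff] at this
    linarith

lemma IsSaddle.snd_eq_gibbs [Nonempty A₂] (h : IsSaddle G η ρ₁ ρ₂ μs νs) (hη : 0 < η)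
    (hρ₂ : ∀ a, 0 < ρ₂ a) : νs = gibbs η ρ₂ (-colPayoff G μs) :=
  eq_gibbs_of_forall_le hρ₂ hη h.2.1 fun ν hν => by
    have := h.2.2.2 ν hν
    rw [J_eq_rowPayoff, J_eq_rowPayoff, ← sum_mul_colPayoff, ← sum_mul_colPayoff] at this
    simp only [Pi.neg_apply, mul_neg, Finset.sum_neg_distrib]
    linarith

end Saddle

lemma abs_sum_mul_le_sum_abs_mul {B : Type*} [Fintype B] (z w : B → ℝ) {M : ℝ}
    (hM : ∀ b, |w b| ≤ M) : |∑ b, z b * w b| ≤ (∑ b, |z b|) * M :=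
  calc |∑ b, z b * w b| ≤ ∑ b, |z b| * |w b| := by
        simpa only [abs_mul] using Finset.abs_sum_le_sum_abs (fun b => z b * w b) Finset.univ
    _ ≤ ∑ b, |z b| * M := Finset.sum_le_sum fun b _ => by gcongr; exact hM b
    _ = (∑ b, |z b|) * M := (Finset.sum_mul _ _ _).symm

lemma IsSimplex.abs_sum_mul_le {B : Type*} [Fintype B] {p : B → ℝ} (hp : IsSimplex p)
    (w : B → ℝ) {M : ℝ} (hM : ∀ b, |w b| ≤ M) : |∑ b, p b * w b| ≤ M := by
  simpa only [abs_of_nonneg (hp.1 _), hp.2, one_mul] using abs_sum_mul_le_sum_abs_mul p w hM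

lemma IsSaddle.sum_abs_sub_add_sum_abs_sub_le {A₁ A₂ : Type*} [Fintype A₁] [Fintype A₂]
    [Nonempty A₁] [Nonempty A₂] {Ĝ G : A₁ × A₂ → ℝ} {η : ℝ} (hη : 0 < η)
    {ρ₁ : A₁ → ℝ} {ρ₂ : A₂ → ℝ} (hρ₁ : ∀ a, 0 < ρ₁ a) (hρ₂ : ∀ a, 0 < ρ₂ a)
    {μh μs : A₁ → ℝ} {νh νs : A₂ → ℝ}
    (hhat : IsSaddle Ĝ η ρ₁ ρ₂ μh νh) (hstar : IsSaddle G η ρ₁ ρ₂ μs νs) {E : ℝ}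
    (hE₁ : ∀ a₁, |rowPayoff (Ĝ - G) νs a₁| ≤ E) (hE₂ : ∀ a₂, |colPayoff (Ĝ - G) μs a₂| ≤ E) :
    (∑ a₁, |μh a₁ - μs a₁|) + (∑ a₂, |νh a₂ - νs a₂|) ≤ 2 * η * E := by
  set x := ∑ a₁, |μh a₁ - μs a₁|
  set y := ∑ a₂, |νh a₂ - νs a₂|
  have eμh := hhat.fst_eq_gibbs hη hρ₁
  have eμs := hstar.fst_eq_gibbs hη hρ₁
  have eνh := hhat.snd_eq_gibbs hη hρ₂
  have eνs := hstar.snd_eq_gibbs hη hρ₂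
  have hx : x ^ 2 ≤ η * ∑ a₁, (μh a₁ - μs a₁) * (rowPayoff Ĝ νh a₁ - rowPayoff G νs a₁) := by
    have := KLdiv_gibbs_add_KLdiv_gibbs (η := η) hρ₁ (rowPayoff Ĝ νh) (rowPayoff G νs)
    rw [← eμh, ← eμs] at this
    exact this ▸ sq_sum_abs_sub_le_KLdiv_add_KLdiv hhat.1 hstar.1
      (eμh ▸ gibbs_pos hρ₁) (eμs ▸ gibbs_pos hρ₁)
  have hy : y ^ 2 ≤ η * ∑ a₂, (νh a₂ - νs a₂) * (colPayoff G μs a₂ - colPayoff Ĝ μh a₂) := by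
    have := KLdiv_gibbs_add_KLdiv_gibbs (η := η) hρ₂ (-colPayoff Ĝ μh) (-colPayoff G μs)
    rw [← eνh, ← eνs] at this
    simp only [Pi.neg_apply, neg_sub_neg] at this
    exact this ▸ sq_sum_abs_sub_le_KLdiv_add_KLdiv hhat.2.1 hstar.2.1
      (eνh ▸ gibbs_pos hρ₂) (eνs ▸ gibbs_pos hρ₂)
  have hcross := sum_sub_mul_payoff_sub_eq Ĝ G μh μs νh νs
  have hrow := (le_abs_self _).trans (abs_sum_mul_le_sum_abs_mul (fun a₁ => μh a₁ - μs a₁) _ hE₁)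
  have hcol := (neg_le_abs _).trans (abs_sum_mul_le_sum_abs_mul (fun a₂ => νh a₂ - νs a₂) _ hE₂)
  have hE : 0 ≤ E := (abs_nonneg _).trans (hE₁ (Classical.arbitrary A₁))
  have hx₀ : 0 ≤ x := Finset.sum_nonneg fun _ _ => abs_nonneg _
  have hy₀ : 0 ≤ y := Finset.sum_nonneg fun _ _ => abs_nonneg _
  have hgap : x ^ 2 + y ^ 2 ≤ η * (x * E + y * E) := by
    nlinarith [mul_le_mul_of_nonneg_left (add_le_add hrow hcol) hη.le]
  nlinarith [sq_nonneg (x - y), mul_nonneg hη.le hE]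

theorem stmt8_general {A₁ A₂ : Type*} [Fintype A₁] [Fintype A₂] [Nonempty A₁] [Nonempty A₂]
    (Ghat Gstar : A₁ × A₂ → ℝ) (η : ℝ) (hη : 0 < η)
    (π₁ref : A₁ → ℝ) (π₂ref : A₂ → ℝ)
    (h₁pos : ∀ a, 0 < π₁ref a) (h₂pos : ∀ a, 0 < π₂ref a)
    (μhat : A₁ → ℝ) (νhat : A₂ → ℝ) (μs : A₁ → ℝ) (νs : A₂ → ℝ)
    (hhat : IsSaddle Ghat η π₁ref π₂ref μhat νhat)
    (hstar : IsSaddle Gstar η π₁ref π₂ref μs νs) :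
    ((∑ a₁, |μhat a₁ - μs a₁|) + (∑ a₂, |νhat a₂ - νs a₂|)
      ≤ 2 * η * max
        (Finset.univ.sup' Finset.univ_nonempty
          (fun a₁ => |∑ a₂, νs a₂ * (Ghat (a₁, a₂) - Gstar (a₁, a₂))|))
        (Finset.univ.sup' Finset.univ_nonempty
          (fun a₂ => |∑ a₁, μs a₁ * (Ghat (a₁, a₂) - Gstar (a₁, a₂))|))) ∧
    ((∑ a₁, |μhat a₁ - μs a₁|) + (∑ a₂, |νhat a₂ - νs a₂|)
      ≤ 2 * η * Finset.univ.sup' Finset.univ_nonempty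
          (fun p : A₁ × A₂ => |Ghat p - Gstar p|)) := by
  have hdist (E : ℝ) := hhat.sum_abs_sub_add_sum_abs_sub_le (E := E) hη h₁pos h₂pos hstar
  have hentry (a₁ : A₁) (a₂ : A₂) : |(Ghat - Gstar) (a₁, a₂)|
      ≤ Finset.univ.sup' Finset.univ_nonempty (fun p : A₁ × A₂ => |Ghat p - Gstar p|) :=
    Finset.le_sup' (fun p : A₁ × A₂ => |Ghat p - Gstar p|) (Finset.mem_univ (a₁, a₂))
  refine ⟨hdist _ (fun a₁ => ?_) (fun a₂ => ?_), hdist _ (fun a₁ => ?_) (fun a₂ => ?_)⟩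
  · exact (Finset.le_sup' (fun a₁ => |rowPayoff (Ghat - Gstar) νs a₁|) (Finset.mem_univ a₁)).trans
      (le_max_left _ _)
  · exact (Finset.le_sup' (fun a₂ => |colPayoff (Ghat - Gstar) μs a₂|) (Finset.mem_univ a₂)).trans
      (le_max_right _ _)
  · exact hstar.2.1.abs_sum_mul_le _ fun a₂ => hentry a₁ a₂
  · exact hstar.1.abs_sum_mul_le _ fun a₁ => hentry a₁ a₂

/-- ℓ1 stability of regularized saddle points with respect to
perturbations of the payoff matrix, via the Nash-averaged error `ℰ`. -/
theorem stmt8 {A₁ A₂ : Type*} [Fintype A₁] [Fintype A₂] [Nonempty A₁] [Nonempty A₂]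
    (Ghat Gstar : A₁ × A₂ → ℝ) (η : ℝ) (hη : 0 < η)
    (π₁ref : A₁ → ℝ) (π₂ref : A₂ → ℝ)
    (h₁ : IsSimplex π₁ref) (h₂ : IsSimplex π₂ref)
    (h₁pos : ∀ a, 0 < π₁ref a) (h₂pos : ∀ a, 0 < π₂ref a)
    (μhat : A₁ → ℝ) (νhat : A₂ → ℝ) (μs : A₁ → ℝ) (νs : A₂ → ℝ)
    (hhat : IsSaddle Ghat η π₁ref π₂ref μhat νhat)
    (hstar : IsSaddle Gstar η π₁ref π₂ref μs νs) :
    ((∑ a₁, |μhat a₁ - μs a₁|) + (∑ a₂, |νhat a₂ - νs a₂|)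
      ≤ 2 * η * max
        (Finset.univ.sup' Finset.univ_nonempty
          (fun a₁ => |∑ a₂, νs a₂ * (Ghat (a₁, a₂) - Gstar (a₁, a₂))|))
        (Finset.univ.sup' Finset.univ_nonempty
          (fun a₂ => |∑ a₁, μs a₁ * (Ghat (a₁, a₂) - Gstar (a₁, a₂))|))) ∧
    ((∑ a₁, |μhat a₁ - μs a₁|) + (∑ a₂, |νhat a₂ - νs a₂|)
      ≤ 2 * η * Finset.univ.sup' Finset.univ_nonempty
          (fun p : A₁ × A₂ => |Ghat p - Gstar p|)) :=
  stmt8_general Ghat Gstar η hη π₁ref π₂ref h₁pos h₂pos μhat νhat μs νs hhat hstar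
end

section
/- Let A₁, A₂ be finite nonempty sets, let Ĝ, G* : A₁ × A₂ → ℝ, let η > 0, and let π₁ʳᵉᶠ ∈ Δ(A₁), π₂ʳᵉᶠ ∈ Δ(A₂) be strictly positive. Let (μ̂, ν̂) be a saddle point of J_Ĝ with value V̂ = J_Ĝ(μ̂, ν̂), and let (μ*, ν*) be a saddle point of J_{G*} with value V* = J_{G*}(μ*, ν*). Then Σ_{a₁,a₂} μ*(a₁)ν̂(a₂)·(Ĝ(a₁,a₂) − G*(a₁,a₂)) ≤ V̂ − V* ≤ Σ_{a₁,a₂} μ̂(a₁)ν*(a₂)·(Ĝ(a₁,a₂) − G*(a₁,a₂)). -/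
open Finset

lemma Jdiff {A₁ A₂ : Type*} [Fintype A₁] [Fintype A₂]
    (G G' : A₁ × A₂ → ℝ) (η : ℝ) (π₁ref : A₁ → ℝ) (π₂ref : A₂ → ℝ)
    (μ : A₁ → ℝ) (ν : A₂ → ℝ) :
    J G η π₁ref π₂ref μ ν - J G' η π₁ref π₂ref μ ν
      = ∑ a₁, ∑ a₂, μ a₁ * ν a₂ * (G (a₁, a₂) - G' (a₁, a₂)) := by
  simp only [J, Finset.sum_sub_distrib, mul_sub]
  ring

/-- two-sided comparison of the saddle-point values of the empirical
and true regularized games in terms of unilateral payoff-error averages. -/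
theorem stmt10 {A₁ A₂ : Type*} [Fintype A₁] [Fintype A₂] [Nonempty A₁] [Nonempty A₂]
    (Ghat Gstar : A₁ × A₂ → ℝ) (η : ℝ) (hη : 0 < η)
    (π₁ref : A₁ → ℝ) (π₂ref : A₂ → ℝ)
    (h₁ : IsSimplex π₁ref) (h₂ : IsSimplex π₂ref)
    (h₁pos : ∀ a, 0 < π₁ref a) (h₂pos : ∀ a, 0 < π₂ref a)
    (μhat : A₁ → ℝ) (νhat : A₂ → ℝ) (μs : A₁ → ℝ) (νs : A₂ → ℝ)
    (hhat : IsSaddle Ghat η π₁ref π₂ref μhat νhat)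
    (hstar : IsSaddle Gstar η π₁ref π₂ref μs νs) :
    (∑ a₁, ∑ a₂, μs a₁ * νhat a₂ * (Ghat (a₁, a₂) - Gstar (a₁, a₂)))
      ≤ J Ghat η π₁ref π₂ref μhat νhat - J Gstar η π₁ref π₂ref μs νs ∧
    J Ghat η π₁ref π₂ref μhat νhat - J Gstar η π₁ref π₂ref μs νs
      ≤ ∑ a₁, ∑ a₂, μhat a₁ * νs a₂ * (Ghat (a₁, a₂) - Gstar (a₁, a₂)) := by
  obtain ⟨hμh, hνh, hμhmax, hνhmin⟩ := hhat
  obtain ⟨hμs, hνs, hμsmax, hνsmin⟩ := hstar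
  constructor
  · have h1 := hμhmax μs hμs
    have h2 := hνsmin νhat hνh
    have h3 := Jdiff Ghat Gstar η π₁ref π₂ref μs νhat
    linarith
  · have h1 := hνhmin νs hνs
    have h2 := hμsmax μhat hμh
    have h3 := Jdiff Ghat Gstar η π₁ref π₂ref μhat νs
    linarith
end

section
/- Let A be a finite nonempty set, let π⁻ ∈ Δ(A) be strictly positive, let δ : A → ℝ, and define the exponential-weights update π⁺(a) = π⁻(a)·exp(δ(a)) / Σ_b π⁻(b)·exp(δ(b)). Then for every π ∈ Δ(A): KL(π‖π⁺) ≤ KL(π‖π⁻) + Σ_a (π⁻(a) − π(a))·δ(a) + (1/8)·osc(δ)², where osc(δ) = max_a δ(a) − min_a δ(a). -/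
/-!
The exponential-weights update is a Gibbs tilt of `π⁻`, so
`KL(π‖π⁺) = KL(π‖π⁻) + log Σ_b π⁻(b) e^{δ(b)} - Σ_a π(a) δ(a)` holds exactly.
The log-partition term is the moment generating function of `δ` under `π⁻`, evaluated at `1`;
since `δ` takes values in an interval of length `osc δ`, Hoeffding's lemma bounds it by
`Σ_a π⁻(a) δ(a) + osc(δ)² / 8`.
-/

open Finset

section

open Real MeasureTheory ProbabilityTheory

namespace IsSimplex

variable {A : Type*} [Fintype A] {w : A → ℝ}

noncomputable def toPMF (hw : IsSimplex w) : PMF A :=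
  PMF.ofFintype (fun a ↦ ENNReal.ofReal (w a)) <| by
    rw [← ENNReal.ofReal_sum_of_nonneg fun a _ ↦ hw.1 a, hw.2, ENNReal.ofReal_one]

theorem integral_toMeasure_toPMF [MeasurableSpace A] [MeasurableSingletonClass A]
    (hw : IsSimplex w) (f : A → ℝ) :
    ∫ a, f a ∂hw.toPMF.toMeasure = ∑ a, w a * f a := by
  simp [PMF.integral_eq_sum, toPMF, ENNReal.toReal_ofReal (hw.1 _)]

theorem log_sum_mul_exp_le (hw : IsSimplex w) (δ : A → ℝ) {m M : ℝ}
    (hδ : ∀ a, δ a ∈ Set.Icc m M) :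
    log (∑ a, w a * exp (δ a)) ≤ ∑ a, w a * δ a + (M - m) ^ 2 / 8 := by
  let _ : MeasurableSpace A := ⊤
  set μ := hw.toPMF.toMeasure
  have hsubgaussian := hasSubgaussianMGF_of_mem_Icc (μ := μ) (X := δ)
    (measurable_of_countable δ).aemeasurable (ae_of_all _ hδ)
  have hoeffding := hsubgaussian.mgf_le 1
  have hmgf : mgf (fun a ↦ δ a - μ[δ]) μ 1
      = exp (-∑ a, w a * δ a) * ∑ a, w a * exp (δ a) := by
    rw [mgf, hw.integral_toMeasure_toPMF, hw.integral_toMeasure_toPMF, mul_sum]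
    exact sum_congr rfl fun a _ ↦ by rw [one_mul, sub_eq_neg_add, exp_add]; ring
  have hZ : 0 < ∑ a, w a * exp (δ a) := by
    have hpos := mgf_pos (hsubgaussian.integrable_exp_mul 1)
    rw [hmgf] at hpos
    exact (mul_pos_iff_of_pos_left (exp_pos _)).1 hpos
  rw [hmgf] at hoeffding
  have hlog := log_le_log (by positivity) hoeffding
  rw [log_mul (exp_pos _).ne' hZ.ne', log_exp, log_exp] at hlog
  push_cast at hlog
  rw [Real.norm_eq_abs, div_pow, sq_abs] at hlog
  linarith

end IsSimplex

noncomputable def expWeights {A : Type*} [Fintype A] (q δ : A → ℝ) (a : A) : ℝ :=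
  q a * exp (δ a) / ∑ b, q b * exp (δ b)

theorem KLdiv_expWeights {A : Type*} [Fintype A] (p q δ : A → ℝ) (hp : ∑ a, p a = 1)
    (hq : ∀ a, q a ≠ 0) (hZ : ∑ b, q b * exp (δ b) ≠ 0) :
    KLdiv p (expWeights q δ) = KLdiv p q + log (∑ b, q b * exp (δ b)) - ∑ a, p a * δ a := by
  have hterm : ∀ a, p a * log (p a / expWeights q δ a)
      = p a * log (p a / q a) + p a * log (∑ b, q b * exp (δ b)) - p a * δ a := by
    intro a
    rcases eq_or_ne (p a) 0 with h0 | h0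
    · simp [h0]
    have hqe : q a * exp (δ a) ≠ 0 := mul_ne_zero (hq a) (exp_pos _).ne'
    rw [expWeights, div_div_eq_mul_div, log_div (mul_ne_zero h0 hZ) hqe, log_mul h0 hZ,
      log_mul (hq a) (exp_pos _).ne', log_exp, log_div h0 (hq a)]
    ring
  simp only [KLdiv, hterm, sum_sub_distrib, sum_add_distrib, ← sum_mul, hp, one_mul]

end

/-- Hoeffding-type online mirror descent descent inequality for the
exponential-weights update `π⁺(a) = π⁻(a) exp(δ(a)) / Σ_b π⁻(b) exp(δ(b))`:
`KL(π‖π⁺) ≤ KL(π‖π⁻) + Σ_a (π⁻(a) − π(a)) δ(a) + (1/8) osc(δ)²`. -/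
theorem stmt12 {A : Type*} [Fintype A] [Nonempty A]
    (πminus : A → ℝ) (hπ : IsSimplex πminus) (hπpos : ∀ a, 0 < πminus a)
    (δ : A → ℝ)
    (πplus : A → ℝ)
    (hπplus : ∀ a, πplus a
      = πminus a * Real.exp (δ a) / ∑ b, πminus b * Real.exp (δ b))
    (π : A → ℝ) (hπ' : IsSimplex π) :
    KLdiv π πplus
      ≤ KLdiv π πminus + (∑ a, (πminus a - π a) * δ a)
        + (1/8) * (Finset.univ.sup' Finset.univ_nonempty δ
            - Finset.univ.inf' Finset.univ_nonempty δ)^2 := by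
  obtain rfl : πplus = expWeights πminus δ := funext hπplus
  have hZ : 0 < ∑ b, πminus b * Real.exp (δ b) :=
    sum_pos (fun a _ ↦ mul_pos (hπpos a) (Real.exp_pos _)) univ_nonempty
  have hδ : ∀ a, δ a ∈ Set.Icc (univ.inf' univ_nonempty δ) (univ.sup' univ_nonempty δ) :=
    fun a ↦ ⟨inf'_le δ (mem_univ a), le_sup' δ (mem_univ a)⟩
  have hoeffding := hπ.log_sum_mul_exp_le δ hδ
  rw [KLdiv_expWeights π πminus δ hπ'.2 (fun a ↦ (hπpos a).ne') hZ.ne']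
  simp only [sub_mul, sum_sub_distrib]
  linarith
end

section
/- Let A be a finite nonempty set, let ref ∈ Δ(A) be strictly positive, let C ≥ 0, and let p, p' ∈ Δ(A) be such that |log(p(a)/ref(a))| ≤ C and |log(p'(a)/ref(a))| ≤ C for all a ∈ A (in particular p and p' are strictly positive). Then |KL(p‖ref) − KL(p'‖ref)| ≤ (1 + C)·‖p − p'‖₁. -/
open Finset

/-! The map `x ↦ x log (x / r)` is not Lipschitz near `0`, but writing
`x log (x/r) - y log (y/r) = (x - y) log (y/r) + x log (x/y)` for `0 ≤ x ≤ y` splits the increment into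
a term controlled by the log-ratio bound at the larger point and the term `x log (x/y)`, which lies in
`[x - y, 0]` by `1 - 1/t ≤ log t ≤ 0` for `t = x/y ≤ 1`. Summing over coordinates gives the theorem. -/

open Real

lemma abs_mul_log_div_le_sub {x y : ℝ} (hx : 0 ≤ x) (hxy : x ≤ y) :
    |x * log (x / y)| ≤ y - x := by
  rcases hx.eq_or_lt with rfl | hx
  · simpa using hxy
  have hy : 0 < y := hx.trans_le hxy
  have hlog_nonpos : log (x / y) ≤ 0 := log_nonpos (by positivity) (div_le_one_of_le₀ hxy hy.le)
  have hlog_lower : 1 - y / x ≤ log (x / y) := by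
    simpa only [inv_div] using one_sub_inv_le_log_of_pos (div_pos hx hy)
  have hmul_lower : x - y ≤ x * log (x / y) := by
    calc x - y = x * (1 - y / x) := by field_simp
      _ ≤ x * log (x / y) := mul_le_mul_of_nonneg_left hlog_lower hx.le
  rw [abs_of_nonpos (mul_nonpos_of_nonneg_of_nonpos hx.le hlog_nonpos)]
  linarith

lemma abs_mul_log_div_sub_mul_log_div_le_of_le {r x y : ℝ} (hr : 0 < r) (hx : 0 ≤ x)
    (hxy : x ≤ y) :
    |x * log (x / r) - y * log (y / r)| ≤ (1 + |log (y / r)|) * (y - x) := by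
  have hsplit : x * log (x / r) = x * log (x / y) + x * log (y / r) := by
    rcases hx.eq_or_lt with rfl | hx
    · simp
    have hy : 0 < y := hx.trans_le hxy
    rw [← mul_add, ← log_mul (by positivity) (by positivity), div_mul_div_cancel₀ hy.ne']
  calc |x * log (x / r) - y * log (y / r)|
      = |(x - y) * log (y / r) + x * log (x / y)| := by rw [hsplit]; ring_nf
    _ ≤ |(x - y) * log (y / r)| + |x * log (x / y)| := abs_add_le _ _
    _ ≤ (y - x) * |log (y / r)| + (y - x) := by
        rw [abs_mul, abs_sub_comm, abs_of_nonneg (sub_nonneg.2 hxy)]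
        gcongr
        exact abs_mul_log_div_le_sub hx hxy
    _ = (1 + |log (y / r)|) * (y - x) := by ring

lemma abs_mul_log_div_sub_mul_log_div_le {r x y C : ℝ} (hr : 0 < r) (hx : 0 ≤ x) (hy : 0 ≤ y)
    (hCx : |log (x / r)| ≤ C) (hCy : |log (y / r)| ≤ C) :
    |x * log (x / r) - y * log (y / r)| ≤ (1 + C) * |x - y| := by
  rcases le_total x y with hxy | hyx
  · rw [abs_of_nonpos (sub_nonpos.2 hxy), neg_sub]
    exact (abs_mul_log_div_sub_mul_log_div_le_of_le hr hx hxy).trans (by gcongr)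
  · rw [abs_sub_comm, abs_of_nonneg (sub_nonneg.2 hyx)]
    exact (abs_mul_log_div_sub_mul_log_div_le_of_le hr hy hyx).trans (by gcongr)

theorem stmt13_general {A : Type*} [Fintype A]
    (ref : A → ℝ) (hrefpos : ∀ a, 0 < ref a)
    (C : ℝ)
    (p p' : A → ℝ) (hp : IsSimplex p) (hp' : IsSimplex p')
    (hlog : ∀ a, |Real.log (p a / ref a)| ≤ C)
    (hlog' : ∀ a, |Real.log (p' a / ref a)| ≤ C) :
    |KLdiv p ref - KLdiv p' ref| ≤ (1 + C) * ∑ a, |p a - p' a| := by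
  rw [KLdiv, KLdiv, ← sum_sub_distrib, mul_sum]
  exact (abs_sum_le_sum_abs _ _).trans <| sum_le_sum fun a _ ↦
    abs_mul_log_div_sub_mul_log_div_le (hrefpos a) (hp.1 a) (hp'.1 a) (hlog a) (hlog' a)

/-- Lipschitzness of `p ↦ KL(p‖ref)` on the class of distributions with
log-density ratio bounded by `C` relative to `ref`:
`|KL(p‖ref) − KL(p'‖ref)| ≤ (1 + C) ‖p − p'‖₁`. -/
theorem stmt13 {A : Type*} [Fintype A] [Nonempty A]
    (ref : A → ℝ) (href : IsSimplex ref) (hrefpos : ∀ a, 0 < ref a)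
    (C : ℝ) (hC : 0 ≤ C)
    (p p' : A → ℝ) (hp : IsSimplex p) (hp' : IsSimplex p')
    (hlog : ∀ a, |Real.log (p a / ref a)| ≤ C)
    (hlog' : ∀ a, |Real.log (p' a / ref a)| ≤ C) :
    |KLdiv p ref - KLdiv p' ref| ≤ (1 + C) * ∑ a, |p a - p' a| :=
  stmt13_general ref hrefpos C p p' hp hp' hlog hlog'
end

section
/- Let (V_t)_{t≥0} be a sequence of nonnegative real numbers and let D ≥ 0 be such that V_{t+1} ≤ (t/(t+2))·V_t + D/(t+2)² for every integer t ≥ 0. Then V_t ≤ D/(t+1) for every integer t ≥ 1. -/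
/-- if a nonnegative sequence satisfies the recursion
`V_{t+1} ≤ (t/(t+2)) V_t + D/(t+2)²` with `D ≥ 0`, then `V_t ≤ D/(t+1)` for all `t ≥ 1`. -/
theorem stmt14 (V : ℕ → ℝ) (hV : ∀ t, 0 ≤ V t) (D : ℝ) (hD : 0 ≤ D)
    (hrec : ∀ t : ℕ, V (t + 1) ≤ ((t : ℝ) / ((t : ℝ) + 2)) * V t + D / ((t : ℝ) + 2)^2) :
    ∀ t : ℕ, 1 ≤ t → V t ≤ D / ((t : ℝ) + 1) := by
  intro t ht
  induction t with
  | zero => omega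
  | succ n ih =>
    rcases Nat.eq_zero_or_pos n with rfl | hn
    · have h := hrec 0
      simp at h
      calc V 1 ≤ D / 4 := by linarith [h]
        _ ≤ D / ((1:ℝ) + 1) := by linarith
        _ = D / ((((0:ℕ)+1:ℕ):ℝ) + 1) := by norm_num
    · have hih := ih hn
      have h := hrec n
      have hnn : (0:ℝ) ≤ (n:ℝ) := Nat.cast_nonneg n
      have h1 : (0:ℝ) < (n:ℝ) + 1 := by linarith
      have h2 : (0:ℝ) < (n:ℝ) + 2 := by linarith
      have step : ((n:ℝ) / ((n:ℝ) + 2)) * V n + D / ((n:ℝ) + 2)^2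
          ≤ D / ((n:ℝ) + 2) := by
        have hmul : ((n:ℝ) / ((n:ℝ) + 2)) * V n ≤ ((n:ℝ) / ((n:ℝ) + 2)) * (D / ((n:ℝ) + 1)) := by
          apply mul_le_mul_of_nonneg_left hih
          positivity
        have key : ((n:ℝ) / ((n:ℝ) + 2)) * (D / ((n:ℝ) + 1)) + D / ((n:ℝ) + 2)^2
            ≤ D / ((n:ℝ) + 2) := by
          rw [← sub_nonneg]
          have heq : D / ((n:ℝ) + 2) - ((n:ℝ) / ((n:ℝ) + 2) * (D / ((n:ℝ) + 1)) + D / ((n:ℝ) + 2) ^ 2)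
              = D / (((n:ℝ) + 1) * ((n:ℝ) + 2) ^ 2) := by
            field_simp
            ring
          rw [heq]
          positivity
        linarith
      calc V (n+1) ≤ _ := h
        _ ≤ D / ((n:ℝ) + 2) := step
        _ = D / (((n:ℕ):ℝ) + 1 + 1) := by ring_nf
        _ = D / ((((n+1):ℕ):ℝ) + 1) := by push_cast; ring_nf
end

section
/- Let A₁, A₂ be finite nonempty sets, Q : A₁ × A₂ → ℝ with max_{a₁,a₂} |Q(a₁,a₂)| ≤ B, η > 0, and π₁ʳᵉᶠ ∈ Δ(A₁), π₂ʳᵉᶠ ∈ Δ(A₂) strictly positive. Let (π₁⁽ᵗ⁾, π₂⁽ᵗ⁾) be the SOS-MD iterates with stepsizes γ_t = 2η/(t+2). Then for every t ≥ 0, every player i ∈ {1,2}, and every a ∈ Aᵢ: |log(πᵢ⁽ᵗ⁾(a) / πᵢʳᵉᶠ(a))| ≤ 2ηB. -/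
open Finset

/-- The SOS-MD self-play iterates: initialization at the reference policies and
normalized multiplicative (mirror-descent) updates with stepsizes `γ_t`. -/
def IsSOSMD {A₁ A₂ : Type*} [Fintype A₁] [Fintype A₂]
    (Q : A₁ × A₂ → ℝ) (η : ℝ) (π₁ref : A₁ → ℝ) (π₂ref : A₂ → ℝ)
    (γ : ℕ → ℝ) (π₁ : ℕ → A₁ → ℝ) (π₂ : ℕ → A₂ → ℝ) : Prop :=
  π₁ 0 = π₁ref ∧ π₂ 0 = π₂ref ∧
  (∀ t : ℕ, ∀ a₁ : A₁, π₁ (t + 1) a₁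
    = (π₁ t a₁ ^ (1 - γ t / η)
        * Real.exp (γ t * ∑ a₂, π₂ t a₂ * Q (a₁, a₂))
        * π₁ref a₁ ^ (γ t / η))
      / ∑ b₁, (π₁ t b₁ ^ (1 - γ t / η)
        * Real.exp (γ t * ∑ a₂, π₂ t a₂ * Q (b₁, a₂))
        * π₁ref b₁ ^ (γ t / η))) ∧
  (∀ t : ℕ, ∀ a₂ : A₂, π₂ (t + 1) a₂
    = (π₂ t a₂ ^ (1 - γ t / η)
        * Real.exp (-(γ t) * ∑ a₁, π₁ t a₁ * Q (a₁, a₂))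
        * π₂ref a₂ ^ (γ t / η))
      / ∑ b₂, (π₂ t b₂ ^ (1 - γ t / η)
        * Real.exp (-(γ t) * ∑ a₁, π₁ t a₁ * Q (a₁, b₂))
        * π₂ref b₂ ^ (γ t / η)))

set_option linter.unusedVariables false in
lemma sosmd_step {A : Type*} [Fintype A] [Nonempty A] (η B γ : ℝ) (hη : 0 < η)
    (hγ0 : 0 < γ) (hγη : γ ≤ η) (hB : 0 ≤ B)
    (pref p q : A → ℝ)
    (hpref : ∀ a, 0 < pref a) (hprefsum : ∑ a, pref a = 1)
    (hp : ∀ a, 0 < p a)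
    (hq : ∀ a, |q a| ≤ B)
    (hr : ∀ a b, Real.log (p a / pref a) - Real.log (p b / pref b) ≤ 2 * η * B)
    (p' : A → ℝ)
    (hp' : ∀ a, p' a = (p a ^ (1 - γ/η) * Real.exp (γ * q a) * pref a ^ (γ/η))
      / ∑ b, (p b ^ (1 - γ/η) * Real.exp (γ * q b) * pref b ^ (γ/η))) :
    (∀ a, 0 < p' a) ∧ (∑ a, p' a = 1) ∧
    (∀ a b, Real.log (p' a / pref a) - Real.log (p' b / pref b) ≤ 2 * η * B) ∧
    (∀ a, |Real.log (p' a / pref a)| ≤ 2 * η * B) := by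
  set r : A → ℝ := fun a => Real.log (p a / pref a) with hrdef
  set u : A → ℝ := fun a => (1 - γ/η) * r a + γ * q a with hudef
  have hl0 : 0 < γ/η := div_pos hγ0 hη
  have hl1 : γ/η ≤ 1 := (div_le_one hη).2 hγη
  -- key rewriting of the numerator
  have key : ∀ a, p a ^ (1 - γ/η) * Real.exp (γ * q a) * pref a ^ (γ/η)
      = pref a * Real.exp (u a) := by
    intro a
    have hpa : p a = pref a * Real.exp (r a) := by
      rw [hrdef]
      rw [Real.exp_log (div_pos (hp a) (hpref a)),
        mul_comm, div_mul_cancel₀ _ (hpref a).ne']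
    rw [hpa, Real.mul_rpow (hpref a).le (Real.exp_pos _).le, ← Real.exp_mul]
    rw [show pref a ^ (1 - γ/η) * Real.exp (r a * (1 - γ/η)) * Real.exp (γ * q a) *
        pref a ^ (γ/η)
      = (pref a ^ (1 - γ/η) * pref a ^ (γ/η)) *
        (Real.exp (r a * (1 - γ/η)) * Real.exp (γ * q a)) by ring]
    rw [← Real.rpow_add (hpref a), ← Real.exp_add]
    have h1 : (1 - γ/η) + γ/η = 1 := by ring
    rw [h1, Real.rpow_one]
    congr 1
    simp only [hudef]
    ring
  have hS : (0:ℝ) < ∑ b, (p b ^ (1 - γ/η) * Real.exp (γ * q b) * pref b ^ (γ/η)) := by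
    apply Finset.sum_pos _ univ_nonempty
    intro b _
    rw [key b]
    exact mul_pos (hpref b) (Real.exp_pos _)
  set S := ∑ b, (p b ^ (1 - γ/η) * Real.exp (γ * q b) * pref b ^ (γ/η)) with hSdef
  have hSS : S = ∑ b, pref b * Real.exp (u b) := by
    apply Finset.sum_congr rfl; intro b _; exact key b
  -- u differences bounded
  have hud : ∀ a b, u a - u b ≤ 2 * η * B := by
    intro a b
    have h1 : (1 - γ/η) * (r a - r b) ≤ (1 - γ/η) * (2 * η * B) :=
      mul_le_mul_of_nonneg_left (hr a b) (by linarith)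
    have h2 : q a - q b ≤ 2 * B := by
      have := abs_le.1 (hq a); have := abs_le.1 (hq b); linarith
    have h3 : γ * (q a - q b) ≤ γ * (2 * B) :=
      mul_le_mul_of_nonneg_left h2 hγ0.le
    have hd : γ / η * η = γ := div_mul_cancel₀ γ hη.ne'
    have h4 : (1 - γ/η) * (2 * η * B) + γ * (2 * B) = 2 * η * B := by
      calc (1 - γ/η) * (2 * η * B) + γ * (2 * B)
          = 2 * η * B - 2 * (γ/η*η) * B + 2 * γ * B := by ring
        _ = 2 * η * B := by rw [hd]; ring
    have expand : u a - u b = (1 - γ/η) * (r a - r b) + γ * (q a - q b) := by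
      simp only [hudef]; ring
    rw [expand]
    calc (1 - γ/η) * (r a - r b) + γ * (q a - q b)
        ≤ (1 - γ/η) * (2 * η * B) + γ * (2 * B) := add_le_add h1 h3
      _ = 2 * η * B := h4
  -- log ratio of new iterate
  have hlog : ∀ a, Real.log (p' a / pref a) = u a - Real.log S := by
    intro a
    rw [hp' a, key a]
    rw [show pref a * Real.exp (u a) / S / pref a = Real.exp (u a) / S by
      rw [div_div, mul_comm S (pref a), ← div_div, mul_div_cancel_left₀ _ (hpref a).ne']]
    rw [Real.log_div (Real.exp_ne_zero _) hS.ne', Real.log_exp]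
  have hpos' : ∀ a, 0 < p' a := by
    intro a; rw [hp' a, key a]
    exact div_pos (mul_pos (hpref a) (Real.exp_pos _)) hS
  have hsum' : (∑ a, p' a) = 1 := by
    rw [Finset.sum_congr rfl (fun a _ => hp' a), ← Finset.sum_div, ← hSdef,
      div_self hS.ne']
  refine ⟨hpos', hsum', ?_, ?_⟩
  · intro a b
    rw [hlog a, hlog b]
    have := hud a b; linarith
  · intro a
    have hlow : Real.exp (u a - 2 * η * B) ≤ S := by
      rw [hSS]
      calc Real.exp (u a - 2 * η * B)
          = ∑ b, pref b * Real.exp (u a - 2 * η * B) := by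
            rw [← Finset.sum_mul, hprefsum, one_mul]
        _ ≤ ∑ b, pref b * Real.exp (u b) := by
            apply Finset.sum_le_sum
            intro b _
            apply mul_le_mul_of_nonneg_left _ (hpref b).le
            apply Real.exp_le_exp.2
            have := hud a b; linarith
    have hupp : S ≤ Real.exp (u a + 2 * η * B) := by
      rw [hSS]
      calc (∑ b, pref b * Real.exp (u b))
          ≤ ∑ b, pref b * Real.exp (u a + 2 * η * B) := by
            apply Finset.sum_le_sum
            intro b _
            apply mul_le_mul_of_nonneg_left _ (hpref b).le
            apply Real.exp_le_exp.2
            have := hud b a; linarith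
        _ = Real.exp (u a + 2 * η * B) := by
            rw [← Finset.sum_mul, hprefsum, one_mul]
    have h1 : u a - 2 * η * B ≤ Real.log S := by
      have := Real.log_le_log (Real.exp_pos _) hlow
      rwa [Real.log_exp] at this
    have h2 : Real.log S ≤ u a + 2 * η * B := by
      have := Real.log_le_log hS hupp
      rwa [Real.log_exp] at this
    rw [hlog a, abs_le]
    constructor <;> linarith

/-- log-linear boundedness of the SOS-MD self-play iterates with
stepsizes `γ_t = 2η/(t+2)`: every iterate of every player has log-density ratio
relative to its reference bounded by `2ηB`. -/
theorem stmt15 {A₁ A₂ : Type*} [Fintype A₁] [Fintype A₂] [Nonempty A₁] [Nonempty A₂]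
    (Q : A₁ × A₂ → ℝ) (B : ℝ) (hQ : ∀ a₁ a₂, |Q (a₁, a₂)| ≤ B)
    (η : ℝ) (hη : 0 < η)
    (π₁ref : A₁ → ℝ) (π₂ref : A₂ → ℝ)
    (h₁ : IsSimplex π₁ref) (h₂ : IsSimplex π₂ref)
    (h₁pos : ∀ a, 0 < π₁ref a) (h₂pos : ∀ a, 0 < π₂ref a)
    (γ : ℕ → ℝ) (hγ : ∀ t : ℕ, γ t = 2 * η / ((t : ℝ) + 2))
    (π₁ : ℕ → A₁ → ℝ) (π₂ : ℕ → A₂ → ℝ)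
    (hsos : IsSOSMD Q η π₁ref π₂ref γ π₁ π₂) :
    ∀ t : ℕ,
      (∀ a₁, |Real.log (π₁ t a₁ / π₁ref a₁)| ≤ 2 * η * B) ∧
      (∀ a₂, |Real.log (π₂ t a₂ / π₂ref a₂)| ≤ 2 * η * B) := by
  obtain ⟨h10, h20, hup1, hup2⟩ := hsos
  have hB : 0 ≤ B :=
    le_trans (abs_nonneg _) (hQ (Classical.arbitrary A₁) (Classical.arbitrary A₂))
  have hγ0 : ∀ t : ℕ, 0 < γ t := by
    intro t; rw [hγ t]; positivity
  have hγη : ∀ t : ℕ, γ t ≤ η := by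
    intro t; rw [hγ t]
    rw [div_le_iff₀ (by positivity)]
    have ht : (0:ℝ) ≤ (t:ℝ) := Nat.cast_nonneg t
    nlinarith
  suffices H : ∀ t : ℕ, (∀ a, 0 < π₁ t a) ∧ (∑ a, π₁ t a = 1) ∧
      (∀ a, 0 < π₂ t a) ∧ (∑ a, π₂ t a = 1) ∧
      (∀ a b, Real.log (π₁ t a / π₁ref a) - Real.log (π₁ t b / π₁ref b) ≤ 2 * η * B) ∧
      (∀ a b, Real.log (π₂ t a / π₂ref a) - Real.log (π₂ t b / π₂ref b) ≤ 2 * η * B) ∧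
      (∀ a, |Real.log (π₁ t a / π₁ref a)| ≤ 2 * η * B) ∧
      (∀ a, |Real.log (π₂ t a / π₂ref a)| ≤ 2 * η * B) by
    exact fun t => ⟨(H t).2.2.2.2.2.2.1, (H t).2.2.2.2.2.2.2⟩
  intro t
  induction t with
  | zero =>
    have e1 : ∀ a, Real.log (π₁ 0 a / π₁ref a) = 0 := by
      intro a; rw [h10, div_self (h₁pos a).ne', Real.log_one]
    have e2 : ∀ a, Real.log (π₂ 0 a / π₂ref a) = 0 := by
      intro a; rw [h20, div_self (h₂pos a).ne', Real.log_one]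
    have hC : (0:ℝ) ≤ 2 * η * B := by positivity
    refine ⟨fun a => h10 ▸ h₁pos a, by rw [h10]; exact h₁.2,
      fun a => h20 ▸ h₂pos a, by rw [h20]; exact h₂.2,
      fun a b => by rw [e1 a, e1 b]; simpa using hC,
      fun a b => by rw [e2 a, e2 b]; simpa using hC,
      fun a => by rw [e1 a]; simpa using hC,
      fun a => by rw [e2 a]; simpa using hC⟩
  | succ t ih =>
    obtain ⟨hp1, hs1, hp2, hs2, hd1, hd2, -, -⟩ := ih
    have hq1 : ∀ a, |∑ b, π₂ t b * Q (a, b)| ≤ B := by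
      intro a
      calc |∑ b, π₂ t b * Q (a, b)| ≤ ∑ b, |π₂ t b * Q (a, b)| :=
            Finset.abs_sum_le_sum_abs _ _
        _ ≤ ∑ b, π₂ t b * B := by
            apply Finset.sum_le_sum; intro b _
            rw [abs_mul, abs_of_pos (hp2 b)]
            exact mul_le_mul_of_nonneg_left (hQ a b) (hp2 b).le
        _ = B := by rw [← Finset.sum_mul, hs2, one_mul]
    have hq2 : ∀ a, |(fun a => -(∑ b, π₁ t b * Q (b, a))) a| ≤ B := by
      intro a
      rw [abs_neg]
      calc |∑ b, π₁ t b * Q (b, a)| ≤ ∑ b, |π₁ t b * Q (b, a)| :=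
            Finset.abs_sum_le_sum_abs _ _
        _ ≤ ∑ b, π₁ t b * B := by
            apply Finset.sum_le_sum; intro b _
            rw [abs_mul, abs_of_pos (hp1 b)]
            exact mul_le_mul_of_nonneg_left (hQ b a) (hp1 b).le
        _ = B := by rw [← Finset.sum_mul, hs1, one_mul]
    have step1 := sosmd_step η B (γ t) hη (hγ0 t) (hγη t) hB π₁ref (π₁ t)
      (fun a => ∑ b, π₂ t b * Q (a, b)) h₁pos h₁.2 hp1 hq1 hd1 (π₁ (t+1)) (hup1 t)
    have step2 := sosmd_step η B (γ t) hη (hγ0 t) (hγη t) hB π₂ref (π₂ t)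
      (fun a => -(∑ b, π₁ t b * Q (b, a))) h₂pos h₂.2 hp2 hq2 hd2 (π₂ (t+1))
      (fun a => by rw [hup2 t a]; simp only [neg_mul, mul_neg])
    exact ⟨step1.1, step1.2.1, step2.1, step2.2.1, step1.2.2.1, step2.2.2.1,
      step1.2.2.2, step2.2.2.2⟩
end
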